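/- arXiv:2007.07520 — 8 statements merged into one kernel-verified Lean document; each statement's English description precedes it below -/
import Mathlib

section
/- Let Γ be a non-complete edge-regular graph with parameters (v,k,λ) and k ≥ 1. Then v + λ − 2k ≥ 0, and equality holds if and only if Γ is a complete multipartite graph. -/
open scoped Classical
open Matrix

variable {V : Type*}

/-- `G` is edge-regular with parameters `(v, k, l)`: it has `v` vertices, every vertex has
degree `k`, and every pair of adjacent vertices has exactly `l` common neighbours. -/
def IsEdgeRegular [Fintype V] (G : SimpleGraph V) (v k l : ℕ) : Prop :=
  Fintype.card V = v ∧ G.IsRegularOfDegree k ∧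
    ∀ x y : V, G.Adj x y → Fintype.card (G.commonNeighbors x y) = l

/-- `C` is an `e`-regular clique of `G` (for `e > 0`): a clique such that every vertex
outside `C` is adjacent to exactly `e` vertices of `C`. -/
def IsRegularCliqueWith [Fintype V] (G : SimpleGraph V) (C : Finset V) (e : ℕ) : Prop :=
  G.IsClique ↑C ∧ 0 < e ∧ ∀ x : V, x ∉ C → (C.filter (fun y => G.Adj x y)).card = e

/-- A Neumaier graph: a non-complete edge-regular graph containing a regular clique. -/
def IsNeumaier [Fintype V] (G : SimpleGraph V) : Prop :=
  (∃ v k l : ℕ, IsEdgeRegular G v k l) ∧ G ≠ ⊤ ∧ ∃ (C : Finset V) (e : ℕ), IsRegularCliqueWith G C e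

/-- A graph is complete multipartite when non-adjacency (together with equality) is
a transitive relation on the vertices. -/
def IsCompleteMultipartite (G : SimpleGraph V) : Prop :=
  ∀ x y z : V, ¬G.Adj x y → ¬G.Adj y z → ¬G.Adj x z

/-- `θ` is a (real) eigenvalue of the adjacency matrix of `G`. -/
def IsAdjEigenvalue [Fintype V] (G : SimpleGraph V) (θ : ℝ) : Prop :=
  ∃ f : V → ℝ, f ≠ 0 ∧ G.adjMatrix ℝ *ᵥ f = θ • f

/-- The average, over all edges of `G`, of the number of common neighbours of the
two endpoints of the edge. -/
noncomputable def avgLambda [Fintype V] (G : SimpleGraph V) : ℝ :=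
  (∑ ed ∈ G.edgeFinset, Sym2.lift
      ⟨fun x y => ((G.commonNeighbors x y).ncard : ℝ),
       fun x y => by dsimp only; rw [SimpleGraph.commonNeighbors_symm]⟩ ed) / (G.edgeFinset.card : ℝ)

/-! For adjacent `x`, `y` inclusion–exclusion gives `|N(x) ∪ N(y)| = 2k - λ`, and this set lies
inside the vertex set, so `v + λ - 2k = v - |N(x) ∪ N(y)| ≥ 0`. Equality means that every vertex
is adjacent to `x` or to `y` for every edge `xy`, which is exactly the transitivity of
non-adjacency. -/

open Finset

namespace SimpleGraph

variable {G : SimpleGraph V} [Fintype V]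

theorem card_commonNeighbors_eq_card_inter (x y : V) :
    Fintype.card (G.commonNeighbors x y) = #(G.neighborFinset x ∩ G.neighborFinset y) := by
  rw [← Set.toFinset_card]
  congr 1
  ext z
  simp [mem_commonNeighbors]

theorem IsRegularOfDegree.exists_adj {k : ℕ} (hG : G.IsRegularOfDegree k) (hk : 1 ≤ k)
    (hnc : G ≠ ⊤) : ∃ x y, G.Adj x y := by
  obtain ⟨x⟩ : Nonempty V := by
    by_contra h
    rw [not_nonempty_iff] at h
    exact hnc (Subsingleton.elim _ _)
  exact ⟨x, (G.degree_pos_iff_exists_adj x).1 (hG x ▸ hk)⟩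

end SimpleGraph

theorem isCompleteMultipartite_iff_neighborFinset_union_eq_univ [Fintype V] {G : SimpleGraph V} :
    IsCompleteMultipartite G ↔
      ∀ x y : V, G.Adj x y → G.neighborFinset x ∪ G.neighborFinset y = univ := by
  simp only [IsCompleteMultipartite, Finset.eq_univ_iff_forall, Finset.mem_union,
    SimpleGraph.mem_neighborFinset]
  refine ⟨fun h x z hxz y => ?_, fun h x y z hxy hyz hxz => ?_⟩
  · by_contra! hy
    exact h x y z hy.1 (fun h => hy.2 h.symm) hxz
  · rcases h x z hxz y with hxy' | hzy
    · exact hxy hxy'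
    · exact hyz hzy.symm

namespace IsEdgeRegular

open SimpleGraph

variable {G : SimpleGraph V} [Fintype V] {v k l : ℕ}

theorem card_neighborFinset_union (hG : IsEdgeRegular G v k l) {x y : V} (hxy : G.Adj x y) :
    (#(G.neighborFinset x ∪ G.neighborFinset y) : ℤ) = 2 * k - l := by
  obtain ⟨-, hreg, hcommon⟩ := hG
  have := Finset.card_union_add_card_inter (G.neighborFinset x) (G.neighborFinset y)
  rw [← card_commonNeighbors_eq_card_inter, hcommon x y hxy, card_neighborFinset_eq_degree,
    card_neighborFinset_eq_degree, hreg x, hreg y] at this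
  omega

end IsEdgeRegular

/-- For a non-complete edge-regular graph with parameters `(v, k, l)` and
`k ≥ 1`, we have `v + l - 2k ≥ 0`, with equality if and only if the graph is a complete
multipartite graph. -/
theorem stmt0 [Fintype V] (G : SimpleGraph V) (v k l : ℕ)
    (hER : IsEdgeRegular G v k l) (hk : 1 ≤ k) (hnc : G ≠ ⊤) :
    0 ≤ (v : ℤ) + l - 2 * k ∧ ((v : ℤ) + l - 2 * k = 0 ↔ IsCompleteMultipartite G) := by
  obtain ⟨x, y, hxy⟩ := hER.2.1.exists_adj hk hnc
  have hunion := hER.card_neighborFinset_union hxy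
  have hv : Fintype.card V = v := hER.1
  refine ⟨?_, ?_⟩
  · have := Finset.card_le_univ (G.neighborFinset x ∪ G.neighborFinset y)
    omega
  · rw [isCompleteMultipartite_iff_neighborFinset_union_eq_univ]
    refine ⟨fun h a b hab => ?_, fun h => ?_⟩
    · rw [← Finset.card_eq_iff_eq_univ]
      have := hER.card_neighborFinset_union hab
      omega
    · rw [← (Finset.card_eq_iff_eq_univ _).2 (h x y hxy)] at hv
      omega
end

section
/- Let Γ be a Neumaier graph containing an e-regular clique of order s+1 (s, e positive integers), and suppose that every clique of Γ of order e+1 is contained in a clique of order s+1. Then every clique of Γ of order e+1 is contained in a unique clique of order s+1. -/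
open scoped Classical
open Matrix

variable {V : Type*}

/-! In an edge-regular graph, counting edges and paths of length two from a clique `D` to its
complement shows that the first two moments of `z ↦ #{y ∈ D | z ~ y}` over `z ∉ D` depend only
on `#D`. For the given `e`-regular clique these values are constantly `e`, so
`∑ z ∉ D, (#{y ∈ D | z ~ y} - e) ^ 2` vanishes for every clique `D` of order `s + 1`: all of them
are `e`-regular. A vertex outside such a `D` therefore has at most `e` neighbours in it, so a
clique sharing `e + 1` vertices with `D` lies inside `D`, and equals it if it has the same order. -/

section RegularClique

open Finset

variable [Fintype V] {G : SimpleGraph V} {C D : Finset V} {k l e : ℕ}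

lemma card_filter_add_card_filter_compl (s : Finset V) (p : V → Prop) [DecidablePred p] :
    #{z ∈ s | p z} + #{z ∈ sᶜ | p z} = #{z | p z} := by
  simp only [card_filter, sum_add_sum_compl]

lemma card_filter_adj_compl_add_card (hreg : G.IsRegularOfDegree k)
    (hD : G.IsClique (D : Set V)) {y : V} (hy : y ∈ D) :
    #{z ∈ Dᶜ | G.Adj y z} + #D = k + 1 := by
  have hin : {z ∈ D | G.Adj y z} = D.erase y := by
    ext z
    simp only [mem_filter, mem_erase]
    exact ⟨fun ⟨hz, hyz⟩ => ⟨hyz.ne', hz⟩, fun ⟨hzy, hz⟩ => ⟨hz, hD hy hz hzy.symm⟩⟩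
  have hsplit := card_filter_add_card_filter_compl D (G.Adj y)
  rw [hin, card_erase_of_mem hy, ← SimpleGraph.neighborFinset_eq_filter,
    SimpleGraph.card_neighborFinset_eq_degree, hreg y] at hsplit
  have := card_pos.2 ⟨y, hy⟩
  omega

lemma card_filter_commonAdj_compl_add_card
    (hl : ∀ x y : V, G.Adj x y → Fintype.card (G.commonNeighbors x y) = l)
    (hD : G.IsClique (D : Set V)) {x y : V} (hx : x ∈ D) (hy : y ∈ D) (hxy : x ≠ y) :
    #{z ∈ Dᶜ | G.Adj x z ∧ G.Adj y z} + #D = l + 2 := by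
  have hin : {z ∈ D | G.Adj x z ∧ G.Adj y z} = (D.erase x).erase y := by
    ext z
    simp only [mem_filter, mem_erase]
    exact ⟨fun ⟨hz, hxz, hyz⟩ => ⟨hyz.ne', hxz.ne', hz⟩,
      fun ⟨hzy, hzx, hz⟩ => ⟨hz, hD hx hz hzx.symm, hD hy hz hzy.symm⟩⟩
  have hall : #{z | G.Adj x z ∧ G.Adj y z} = l := by
    rw [← hl x y (hD hx hy hxy)]
    exact (Fintype.card_of_subtype _ fun z => by simp [SimpleGraph.mem_commonNeighbors]).symm
  have hsplit := card_filter_add_card_filter_compl D (fun z => G.Adj x z ∧ G.Adj y z)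
  rw [hin, card_erase_of_mem (mem_erase.2 ⟨hxy.symm, hy⟩), card_erase_of_mem hx, hall]
    at hsplit
  have : 2 ≤ #D := one_lt_card.2 ⟨x, hx, y, hy, hxy⟩
  omega

lemma sum_card_filter_adj_compl (hreg : G.IsRegularOfDegree k) (hD : G.IsClique (D : Set V)) :
    ∑ z ∈ Dᶜ, (#{y ∈ D | G.Adj z y} : ℤ) = #D * (k + 1 - #D) := by
  have hdc : ∑ z ∈ Dᶜ, #{y ∈ D | G.Adj z y} = ∑ y ∈ D, #{z ∈ Dᶜ | G.Adj y z} := by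
    simpa [bipartiteAbove, bipartiteBelow, G.adj_comm] using
      sum_card_bipartiteAbove_eq_sum_card_bipartiteBelow (s := Dᶜ) (t := D) (r := G.Adj)
  have hrow : ∀ y ∈ D, (#{z ∈ Dᶜ | G.Adj y z} : ℤ) = k + 1 - #D := fun y hy => by
    have := card_filter_adj_compl_add_card hreg hD hy
    omega
  rw [← Nat.cast_sum, hdc, Nat.cast_sum, sum_congr rfl hrow, sum_const, nsmul_eq_mul]

lemma sum_sq_card_filter_adj_compl (hreg : G.IsRegularOfDegree k)
    (hl : ∀ x y : V, G.Adj x y → Fintype.card (G.commonNeighbors x y) = l)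
    (hD : G.IsClique (D : Set V)) :
    ∑ z ∈ Dᶜ, (#{y ∈ D | G.Adj z y} : ℤ) ^ 2 =
      #D * ((k + 1 - #D) + (#D - 1) * (l + 2 - #D)) := by
  have hsq : ∀ z, (#{y ∈ D | G.Adj z y} : ℤ) ^ 2 =
      #{p ∈ D ×ˢ D | G.Adj z p.1 ∧ G.Adj z p.2} := fun z => by
    rw [filter_product, card_product]
    push_cast
    ring
  have hdc : ∑ z ∈ Dᶜ, #{p ∈ D ×ˢ D | G.Adj z p.1 ∧ G.Adj z p.2} =
      ∑ p ∈ D ×ˢ D, #{z ∈ Dᶜ | G.Adj p.1 z ∧ G.Adj p.2 z} := by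
    simpa [bipartiteAbove, bipartiteBelow, G.adj_comm] using
      sum_card_bipartiteAbove_eq_sum_card_bipartiteBelow (s := Dᶜ) (t := D ×ˢ D)
        (r := fun z p => G.Adj z p.1 ∧ G.Adj z p.2)
  have hrow : ∀ x ∈ D, ∑ y ∈ D, (#{z ∈ Dᶜ | G.Adj x z ∧ G.Adj y z} : ℤ) =
      (k + 1 - #D) + (#D - 1) * (l + 2 - #D) := fun x hx => by
    have hdiag := card_filter_adj_compl_add_card hreg hD hx
    have hoff : ∀ y ∈ D.erase x, (#{z ∈ Dᶜ | G.Adj x z ∧ G.Adj y z} : ℤ) = l + 2 - #D :=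
      fun y hy => by
        have := card_filter_commonAdj_compl_add_card hl hD hx (mem_of_mem_erase hy)
          (ne_of_mem_erase hy).symm
        omega
    rw [← add_sum_erase _ _ hx, sum_congr rfl hoff, sum_const, card_erase_of_mem hx,
      nsmul_eq_mul, Nat.cast_pred (card_pos.2 ⟨x, hx⟩)]
    simp only [and_self]
    omega
  simp_rw [hsq]
  rw [← Nat.cast_sum, hdc, Nat.cast_sum, sum_product, sum_congr rfl hrow, sum_const,
    nsmul_eq_mul]

lemma sum_sq_card_filter_adj_compl_sub (hreg : G.IsRegularOfDegree k)
    (hl : ∀ x y : V, G.Adj x y → Fintype.card (G.commonNeighbors x y) = l)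
    (hD : G.IsClique (D : Set V)) (e : ℤ) :
    ∑ z ∈ Dᶜ, ((#{y ∈ D | G.Adj z y} : ℤ) - e) ^ 2 =
      #D * ((k + 1 - #D) + (#D - 1) * (l + 2 - #D)) - 2 * e * (#D * (k + 1 - #D)) +
        e ^ 2 * (Fintype.card V - #D) := by
  simp_rw [sub_sq]
  rw [sum_add_distrib, sum_sub_distrib, ← sum_mul, ← mul_sum, sum_const, card_compl,
    sum_sq_card_filter_adj_compl hreg hl hD, sum_card_filter_adj_compl hreg hD,
    nsmul_eq_mul, Nat.cast_sub (card_le_univ D)]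
  ring

lemma IsRegularCliqueWith.of_isClique_of_card_eq {v : ℕ} (hER : IsEdgeRegular G v k l)
    (hC : IsRegularCliqueWith G C e) (hD : G.IsClique (D : Set V)) (hcard : #D = #C) :
    IsRegularCliqueWith G D e := by
  obtain ⟨-, hreg, hl⟩ := hER
  have hCzero : ∑ z ∈ Cᶜ, ((#{y ∈ C | G.Adj z y} : ℤ) - e) ^ 2 = 0 :=
    sum_eq_zero fun z hz => by rw [hC.2.2 z (mem_compl.1 hz)]; ring
  have hDzero : ∑ z ∈ Dᶜ, ((#{y ∈ D | G.Adj z y} : ℤ) - e) ^ 2 = 0 := by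
    rw [sum_sq_card_filter_adj_compl_sub hreg hl hD, hcard,
      ← sum_sq_card_filter_adj_compl_sub hreg hl hC.1, hCzero]
  refine ⟨hD, hC.2.1, fun x hx => ?_⟩
  have hx0 := (sum_eq_zero_iff_of_nonneg fun z _ => sq_nonneg _).1 hDzero x (mem_compl.2 hx)
  exact_mod_cast sub_eq_zero.1 (pow_eq_zero_iff two_ne_zero |>.1 hx0)

lemma IsRegularCliqueWith.subset_of_lt_card_inter (hC : IsRegularCliqueWith G C e)
    (hD : G.IsClique (D : Set V)) (h : e < #(C ∩ D)) : D ⊆ C := by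
  intro x hx
  by_contra hxC
  have hsub : C ∩ D ⊆ {y ∈ C | G.Adj x y} := fun y hy => by
    obtain ⟨hyC, hyD⟩ := mem_inter.1 hy
    exact mem_filter.2 ⟨hyC, hD hx hyD (by rintro rfl; exact hxC hyC)⟩
  have := card_le_card hsub
  rw [hC.2.2 x hxC] at this
  omega

end RegularClique

theorem stmt3_general [Fintype V] (G : SimpleGraph V) (v k l s e : ℕ)
    (hER : IsEdgeRegular G v k l)
    (C : Finset V) (hC : IsRegularCliqueWith G C e) (hCcard : C.card = s + 1)
    (hext : ∀ H : Finset V, G.IsNClique (e + 1) H → ∃ D : Finset V, G.IsNClique (s + 1) D ∧ H ⊆ D) :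
    ∀ H : Finset V, G.IsNClique (e + 1) H →
      ∃! D : Finset V, G.IsNClique (s + 1) D ∧ H ⊆ D := by
  intro H hH
  obtain ⟨D, hD, hHD⟩ := hext H hH
  have hDreg : IsRegularCliqueWith G D e :=
    hC.of_isClique_of_card_eq hER hD.1 (hD.2.trans hCcard.symm)
  refine ⟨D, ⟨hD, hHD⟩, fun D' ⟨hD', hHD'⟩ => ?_⟩
  have hHinter := Finset.card_le_card (Finset.subset_inter hHD hHD')
  rw [hH.2] at hHinter
  exact Finset.eq_of_subset_of_card_le (hDreg.subset_of_lt_card_inter hD'.1 hHinter)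
    (by rw [hD.2, hD'.2])

/-- In a Neumaier graph with an `e`-regular clique of order `s + 1`, if every
clique of order `e + 1` is contained in a clique of order `s + 1`, then every clique of order
`e + 1` is contained in a *unique* clique of order `s + 1`. -/
theorem stmt3 [Fintype V] (G : SimpleGraph V) (v k l s e : ℕ)
    (hER : IsEdgeRegular G v k l) (hnc : G ≠ ⊤) (hs : 0 < s) (he : 0 < e)
    (C : Finset V) (hC : IsRegularCliqueWith G C e) (hCcard : C.card = s + 1)
    (hext : ∀ H : Finset V, G.IsNClique (e + 1) H → ∃ D : Finset V, G.IsNClique (s + 1) D ∧ H ⊆ D) :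
    ∀ H : Finset V, G.IsNClique (e + 1) H →
      ∃! D : Finset V, G.IsNClique (s + 1) D ∧ H ⊆ D :=
  stmt3_general G v k l s e hER C hC hCcard hext
end

section
/- Let Γ be a Neumaier graph containing an e-regular clique of order s+1 (s, e positive integers), and suppose that every clique of Γ of order e+1 is contained in a clique of order s+1. Then every clique of Γ is contained in a clique of order s+1. -/
open scoped Classical
open Matrix

variable {V : Type*}

section Aux
variable [Fintype V] {G : SimpleGraph V} {k l s e : ℕ}

private lemma filter_adj_in_clique {D : Finset V} (hD : G.IsClique ↑D) (hcard : D.card = s + 1)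
    {y : V} (hy : y ∈ D) : (D.filter (fun x => G.Adj x y)).card = s := by
  have h : D.filter (fun x => G.Adj x y) = D.erase y := by
    ext x
    simp only [Finset.mem_filter, Finset.mem_erase]
    constructor
    · rintro ⟨hx, hadj⟩; exact ⟨hadj.ne, hx⟩
    · rintro ⟨hne, hx⟩; exact ⟨hx, hD hx hy hne⟩
  rw [h, Finset.card_erase_of_mem hy, hcard]
  omega

private lemma compl_filter_adj (hreg : G.IsRegularOfDegree k) {D : Finset V}
    (hD : G.IsClique ↑D) (hcard : D.card = s + 1) {y : V} (hy : y ∈ D) :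
    ((Dᶜ.filter (fun x => G.Adj x y)).card : ℤ) = (k : ℤ) - s := by
  have huniv : (Finset.univ.filter (fun x => G.Adj x y)).card = k := by
    have hdeg := hreg y
    rw [← hdeg, SimpleGraph.degree, SimpleGraph.neighborFinset_eq_filter]
    congr 1
    exact Finset.filter_congr (fun x _ => by rw [SimpleGraph.adj_comm])
  have hsplit : (D.filter (fun x => G.Adj x y)).card
      + (Dᶜ.filter (fun x => G.Adj x y)).card = k := by
    rw [← huniv, ← Finset.card_union_of_disjoint
      (Finset.disjoint_filter_filter disjoint_compl_right),
      ← Finset.filter_union, Finset.union_compl]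
  rw [filter_adj_in_clique hD hcard hy] at hsplit
  have h2 := congrArg (fun n : ℕ => (n : ℤ)) hsplit
  push_cast at h2
  linarith

private lemma compl_filter_adj₂
    (hl : ∀ x y : V, G.Adj x y → Fintype.card (G.commonNeighbors x y) = l)
    {D : Finset V} (hD : G.IsClique ↑D) (hcard : D.card = s + 1) {y z : V}
    (hy : y ∈ D) (hz : z ∈ D) (hyz : y ≠ z) :
    ((Dᶜ.filter (fun x => G.Adj x y ∧ G.Adj x z)).card : ℤ) = (l : ℤ) - s + 1 := by
  have hadjyz : G.Adj y z := hD hy hz hyz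
  have huniv : (Finset.univ.filter (fun x => G.Adj x y ∧ G.Adj x z)).card = l := by
    rw [← hl y z hadjyz]
    rw [← Set.toFinset_card]
    congr 1
    ext x
    simp only [Set.mem_toFinset, SimpleGraph.mem_commonNeighbors, Finset.mem_filter,
      Finset.mem_univ, true_and]
    constructor
    · rintro ⟨h1, h2⟩; exact ⟨h1.symm, h2.symm⟩
    · rintro ⟨h1, h2⟩; exact ⟨h1.symm, h2.symm⟩
  have hin : (D.filter (fun x => G.Adj x y ∧ G.Adj x z)).card = s - 1 := by
    have h : D.filter (fun x => G.Adj x y ∧ G.Adj x z) = (D.erase y).erase z := by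
      ext x
      simp only [Finset.mem_filter, Finset.mem_erase]
      constructor
      · rintro ⟨hx, h1, h2⟩; exact ⟨h2.ne, h1.ne, hx⟩
      · rintro ⟨hxz, hxy, hx⟩; exact ⟨hx, hD hx hy hxy, hD hx hz hxz⟩
    rw [h, Finset.card_erase_of_mem (Finset.mem_erase.2 ⟨hyz.symm, hz⟩),
      Finset.card_erase_of_mem hy, hcard]
    omega
  have hs1 : 1 ≤ s := by
    have h2 : 2 ≤ D.card := Finset.one_lt_card.2 ⟨y, hy, z, hz, hyz⟩
    omega
  have hsplit : (D.filter (fun x => G.Adj x y ∧ G.Adj x z)).card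
      + (Dᶜ.filter (fun x => G.Adj x y ∧ G.Adj x z)).card = l := by
    rw [← huniv, ← Finset.card_union_of_disjoint
      (Finset.disjoint_filter_filter disjoint_compl_right),
      ← Finset.filter_union, Finset.union_compl]
  rw [hin] at hsplit
  have h2 := congrArg (fun n : ℕ => (n : ℤ)) hsplit
  push_cast [Nat.cast_sub hs1] at h2
  linarith

/-- First moment: sum over outside vertices of the number of neighbours in the clique. -/
private lemma moment1 (hreg : G.IsRegularOfDegree k) {D : Finset V}
    (hD : G.IsClique ↑D) (hcard : D.card = s + 1) :
    ∑ x ∈ Dᶜ, ((D.filter (fun y => G.Adj x y)).card : ℤ)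
      = (s + 1 : ℤ) * ((k : ℤ) - s) := by
  have step : ∀ x ∈ Dᶜ, ((D.filter (fun y => G.Adj x y)).card : ℤ)
      = ∑ y ∈ D, (if G.Adj x y then (1 : ℤ) else 0) := by
    intro x _
    rw [Finset.card_filter]
    push_cast
    rfl
  rw [Finset.sum_congr rfl step, Finset.sum_comm]
  have inner : ∀ y ∈ D, ∑ x ∈ Dᶜ, (if G.Adj x y then (1 : ℤ) else 0) = (k : ℤ) - s := by
    intro y hy
    rw [← compl_filter_adj hreg hD hcard hy, Finset.card_filter]
    push_cast
    rfl
  rw [Finset.sum_congr rfl inner, Finset.sum_const, hcard]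
  push_cast
  ring

/-- Second moment. -/
private lemma moment2 (hreg : G.IsRegularOfDegree k)
    (hl : ∀ x y : V, G.Adj x y → Fintype.card (G.commonNeighbors x y) = l)
    {D : Finset V} (hD : G.IsClique ↑D) (hcard : D.card = s + 1) :
    ∑ x ∈ Dᶜ, ((D.filter (fun y => G.Adj x y)).card : ℤ) ^ 2
      = (s + 1 : ℤ) * ((k : ℤ) - s) + (s + 1 : ℤ) * s * ((l : ℤ) - s + 1) := by
  have step : ∀ x ∈ Dᶜ, ((D.filter (fun y => G.Adj x y)).card : ℤ) ^ 2
      = ∑ y ∈ D, ∑ z ∈ D, (if G.Adj x y ∧ G.Adj x z then (1 : ℤ) else 0) := by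
    intro x _
    have hc : ((D.filter (fun y => G.Adj x y)).card : ℤ)
        = ∑ y ∈ D, (if G.Adj x y then (1 : ℤ) else 0) := by
      rw [Finset.card_filter]; push_cast; rfl
    rw [hc, sq, Finset.sum_mul_sum]
    refine Finset.sum_congr rfl fun y _ => Finset.sum_congr rfl fun z _ => ?_
    by_cases h1 : G.Adj x y <;> by_cases h2 : G.Adj x z <;> simp [h1, h2]
  rw [Finset.sum_congr rfl step, Finset.sum_comm]
  have swap2 : ∀ y ∈ D, ∑ x ∈ Dᶜ, ∑ z ∈ D, (if G.Adj x y ∧ G.Adj x z then (1 : ℤ) else 0)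
      = ∑ z ∈ D, ∑ x ∈ Dᶜ, (if G.Adj x y ∧ G.Adj x z then (1 : ℤ) else 0) := by
    intro y _; exact Finset.sum_comm
  rw [Finset.sum_congr rfl swap2]
  have inner : ∀ y ∈ D, ∑ z ∈ D, ∑ x ∈ Dᶜ, (if G.Adj x y ∧ G.Adj x z then (1 : ℤ) else 0)
      = ((k : ℤ) - s) + s * ((l : ℤ) - s + 1) := by
    intro y hy
    have hcardsum : ∀ z ∈ D, ∑ x ∈ Dᶜ, (if G.Adj x y ∧ G.Adj x z then (1 : ℤ) else 0)
        = ((Dᶜ.filter (fun x => G.Adj x y ∧ G.Adj x z)).card : ℤ) := by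
      intro z _
      rw [Finset.card_filter]; push_cast; rfl
    rw [Finset.sum_congr rfl hcardsum, ← Finset.add_sum_erase _ _ hy]
    have hdiag : ((Dᶜ.filter (fun x => G.Adj x y ∧ G.Adj x y)).card : ℤ) = (k : ℤ) - s := by
      rw [← compl_filter_adj hreg hD hcard hy]
      congr 2
      exact Finset.filter_congr (fun x _ => by tauto)
    have hoff : ∀ z ∈ D.erase y,
        ((Dᶜ.filter (fun x => G.Adj x y ∧ G.Adj x z)).card : ℤ) = (l : ℤ) - s + 1 := by
      intro z hz
      have hz' := Finset.mem_erase.1 hz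
      exact compl_filter_adj₂ hl hD hcard hy hz'.2 (Ne.symm hz'.1)
    rw [hdiag, Finset.sum_congr rfl hoff, Finset.sum_const,
      Finset.card_erase_of_mem hy, hcard]
    push_cast
    ring
  rw [Finset.sum_congr rfl inner, Finset.sum_const, hcard]
  push_cast
  ring

/-- Every `(s+1)`-clique of an edge-regular graph containing an `e`-regular `(s+1)`-clique
is itself `e`-regular. -/
private lemma clique_regular (hreg : G.IsRegularOfDegree k)
    (hl : ∀ x y : V, G.Adj x y → Fintype.card (G.commonNeighbors x y) = l)
    {C : Finset V} (hC : IsRegularCliqueWith G C e) (hCcard : C.card = s + 1)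
    {D : Finset V} (hD : G.IsNClique (s + 1) D) : IsRegularCliqueWith G D e := by
  refine ⟨hD.isClique, hC.2.1, ?_⟩
  -- the sum of squared deviations from `e` over the outside vertices
  have expand : ∀ A : Finset V, G.IsClique ↑A → A.card = s + 1 →
      (∑ x ∈ Aᶜ, (((A.filter (fun y => G.Adj x y)).card : ℤ) - e) ^ 2)
        = ((s + 1 : ℤ) * ((k : ℤ) - s) + (s + 1 : ℤ) * s * ((l : ℤ) - s + 1))
        - 2 * e * ((s + 1 : ℤ) * ((k : ℤ) - s))
        + (e : ℤ) ^ 2 * ((Fintype.card V : ℤ) - (s + 1)) := by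
    intro A hA hAcard
    have hcompl : ((Aᶜ.card : ℤ)) = (Fintype.card V : ℤ) - (s + 1) := by
      rw [Finset.card_compl, hAcard]
      have : s + 1 ≤ Fintype.card V := hAcard ▸ Finset.card_le_univ A
      push_cast [Nat.cast_sub this]
      ring
    have hpt : ∀ x ∈ Aᶜ, (((A.filter (fun y => G.Adj x y)).card : ℤ) - e) ^ 2
        = ((A.filter (fun y => G.Adj x y)).card : ℤ) ^ 2
          - 2 * e * ((A.filter (fun y => G.Adj x y)).card : ℤ) + (e : ℤ) ^ 2 :=
      fun x _ => by ring
    rw [Finset.sum_congr rfl hpt, Finset.sum_add_distrib, Finset.sum_sub_distrib,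
      ← Finset.mul_sum, Finset.sum_const, nsmul_eq_mul,
      moment1 hreg hA hAcard, moment2 hreg hl hA hAcard, hcompl]
    ring
  have hfC : (∑ x ∈ Cᶜ, (((C.filter (fun y => G.Adj x y)).card : ℤ) - e) ^ 2) = 0 := by
    refine Finset.sum_eq_zero fun x hx => ?_
    rw [hC.2.2 x (by simpa using hx)]
    ring
  have hfD : (∑ x ∈ Dᶜ, (((D.filter (fun y => G.Adj x y)).card : ℤ) - e) ^ 2) = 0 := by
    rw [expand D hD.isClique hD.card_eq, ← expand C hC.1 hCcard, hfC]
  have hnonneg : ∀ x ∈ Dᶜ, (0 : ℤ) ≤ (((D.filter (fun y => G.Adj x y)).card : ℤ) - e) ^ 2 :=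
    fun x _ => sq_nonneg _
  intro x hx
  have hx' : x ∈ Dᶜ := by simpa using hx
  have := (Finset.sum_eq_zero_iff_of_nonneg hnonneg).1 hfD x hx'
  have h0 : (((D.filter (fun y => G.Adj x y)).card : ℤ) - e) = 0 := by
    exact pow_eq_zero_iff (by norm_num) |>.1 this
  have : ((D.filter (fun y => G.Adj x y)).card : ℤ) = (e : ℤ) := by linarith
  exact_mod_cast this

/-- The extension lemma: starting from an `e`-regular `(s+1)`-clique, any clique can be
pushed into an `(s+1)`-clique. -/
private lemma extend_clique (hreg : G.IsRegularOfDegree k)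
    (hl : ∀ x y : V, G.Adj x y → Fintype.card (G.commonNeighbors x y) = l)
    {C : Finset V} (hC : IsRegularCliqueWith G C e) (hCcard : C.card = s + 1)
    (hext : ∀ H : Finset V, G.IsNClique (e + 1) H →
      ∃ D : Finset V, G.IsNClique (s + 1) D ∧ H ⊆ D) :
    ∀ (n : ℕ) (D H : Finset V), G.IsNClique (s + 1) D → IsRegularCliqueWith G D e →
      G.IsClique ↑H → (H \ D).card ≤ n →
      ∃ D' : Finset V, G.IsNClique (s + 1) D' ∧ H ⊆ D' := by
  intro n
  induction n with
  | zero =>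
    intro D H hD _ _ hcard
    refine ⟨D, hD, fun w hw => ?_⟩
    by_contra hwD
    have : w ∈ H \ D := Finset.mem_sdiff.2 ⟨hw, hwD⟩
    have := Finset.card_pos.2 ⟨w, this⟩
    omega
  | succ n ih =>
    intro D H hD hDreg hH hcard
    by_cases hsub : H ⊆ D
    · exact ⟨D, hD, hsub⟩
    · obtain ⟨z, hzH, hzD⟩ : ∃ z ∈ H, z ∉ D := by
        simpa [Finset.subset_iff] using hsub
      -- K = {z} ∪ (N(z) ∩ D) is an (e+1)-clique
      have hKclique : G.IsNClique (e + 1) (insert z (D.filter (fun y => G.Adj z y))) := by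
        constructor
        · intro a ha b hb hab
          simp only [Finset.coe_insert, Set.mem_insert_iff, Finset.mem_coe,
            Finset.mem_filter] at ha hb
          rcases ha with rfl | ⟨haD, haAdj⟩
          · rcases hb with rfl | ⟨hbD, hbAdj⟩
            · exact absurd rfl hab
            · exact hbAdj
          · rcases hb with rfl | ⟨hbD, hbAdj⟩
            · exact haAdj.symm
            · exact hD.isClique haD hbD hab
        · rw [Finset.card_insert_of_notMem (by
            simp only [Finset.mem_filter]; exact fun h => hzD h.1),
            hDreg.2.2 z hzD]
      obtain ⟨D₁, hD₁, hKD₁⟩ := hext _ hKclique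
      have hD₁reg : IsRegularCliqueWith G D₁ e := clique_regular hreg hl hC hCcard hD₁
      refine ih D₁ H hD₁ hD₁reg hH ?_
      -- H \ D₁ ⊆ (H \ D).erase z
      have hsubset : H \ D₁ ⊆ (H \ D).erase z := by
        intro w hw
        have hw' := Finset.mem_sdiff.1 hw
        have hwz : w ≠ z := by
          rintro rfl
          exact hw'.2 (hKD₁ (Finset.mem_insert_self _ _))
        refine Finset.mem_erase.2 ⟨hwz, Finset.mem_sdiff.2 ⟨hw'.1, fun hwD => ?_⟩⟩
        have hwK : w ∈ insert z (D.filter (fun y => G.Adj z y)) := by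
          refine Finset.mem_insert_of_mem (Finset.mem_filter.2 ⟨hwD, ?_⟩)
          exact (hH hw'.1 hzH hwz).symm
        exact hw'.2 (hKD₁ hwK)
      have h1 : (H \ D₁).card ≤ ((H \ D).erase z).card := Finset.card_le_card hsubset
      have h2 : ((H \ D).erase z).card = (H \ D).card - 1 :=
        Finset.card_erase_of_mem (Finset.mem_sdiff.2 ⟨hzH, hzD⟩)
      have h3 : 1 ≤ (H \ D).card := Finset.card_pos.2 ⟨z, Finset.mem_sdiff.2 ⟨hzH, hzD⟩⟩
      omega

end Aux

/-- In a Neumaier graph with an `e`-regular clique of order `s + 1`, if every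
clique of order `e + 1` is contained in a clique of order `s + 1`, then *every* clique is
contained in a clique of order `s + 1`. -/
theorem stmt4 [Fintype V] (G : SimpleGraph V) (v k l s e : ℕ)
    (hER : IsEdgeRegular G v k l) (hnc : G ≠ ⊤) (hs : 0 < s) (he : 0 < e)
    (C : Finset V) (hC : IsRegularCliqueWith G C e) (hCcard : C.card = s + 1)
    (hext : ∀ H : Finset V, G.IsNClique (e + 1) H → ∃ D : Finset V, G.IsNClique (s + 1) D ∧ H ⊆ D) :
    ∀ H : Finset V, G.IsClique ↑H → ∃ D : Finset V, G.IsNClique (s + 1) D ∧ H ⊆ D := by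
  intro H hH
  obtain ⟨hv, hreg, hl⟩ := hER
  exact extend_clique hreg hl hC hCcard hext (H \ C).card C H ⟨hC.1, hCcard⟩ hC hH le_rfl
end

section
/- Let Γ be a Neumaier graph containing an e-regular clique of order s+1 (s, e positive integers), and suppose that every clique of Γ of order e+1 is contained in a clique of order s+1. Then the number of cliques of order s+1 containing a given edge is the same for all edges of Γ. -/
open scoped Classical
open Matrix

variable {V : Type*}

/-!
For an `(s+1)`-clique `D` of a `k`-regular graph with `λ` common neighbours on every edge, the
first two moments of `z ↦ #(N(z) ∩ D)` over the vertices `z ∉ D` depend only on `k`, `λ`, `s`.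
They are those of the constant `e` for the `e`-regular clique `C`, so every `(s+1)`-clique is
`e`-regular, and then every `(e+1)`-clique lies in exactly one `(s+1)`-clique.

Let `y` be adjacent to every vertex of a set `S`. Sending an `(s+1)`-clique `D ⊇ S` with `y ∉ D`
to the `(s+1)`-clique through `y` and its `e` neighbours in `D` yields the double count
`#{D ⊇ S ∪ {y}} * (#Z + s + 1 - e) = #{D ⊇ S} * (s + 1 - e)`, where `Z` is the set of common
neighbours of `S` distinct from and not adjacent to `y`. For `S = ∅` and `S = {x}` the size of `Z`
is `v - 1 - k` and `k - 1 - λ`, so the number of `(s+1)`-cliques through a vertex, and then through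
an edge, is constant.
-/

open Finset

lemma Finset.sum_sub_sq_eq_of_moments_eq {ι : Type*} {s t : Finset ι}
    {f g : ι → ℕ} (c : ℤ) (h₀ : #s = #t) (h₁ : ∑ i ∈ s, f i = ∑ i ∈ t, g i)
    (h₂ : ∑ i ∈ s, f i ^ 2 = ∑ i ∈ t, g i ^ 2) :
    ∑ i ∈ s, ((f i : ℤ) - c) ^ 2 = ∑ i ∈ t, ((g i : ℤ) - c) ^ 2 := by
  have expand : ∀ (u : Finset ι) (h : ι → ℕ), ∑ i ∈ u, ((h i : ℤ) - c) ^ 2 =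
      ((∑ i ∈ u, h i ^ 2 : ℕ) : ℤ) - 2 * c * ((∑ i ∈ u, h i : ℕ) : ℤ) + #u * c ^ 2 := by
    intro u h
    push_cast
    simp only [sub_sq, sum_add_distrib, sum_sub_distrib, sum_const, nsmul_eq_mul, mul_sum]
    exact congrArg₂ _ (congrArg₂ _ rfl (sum_congr rfl fun _ _ => by ring)) rfl
  rw [expand, expand, h₀, h₁, h₂]

namespace SimpleGraph

variable {G : SimpleGraph V}

def CliquesRegular (G : SimpleGraph V) (n e : ℕ) : Prop :=
  ∀ D, G.IsNClique n D → ∀ z ∉ D, #{a ∈ D | G.Adj z a} = e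

def CliquesExtend (G : SimpleGraph V) (m n : ℕ) : Prop :=
  ∀ H, G.IsNClique m H → ∃ D, G.IsNClique n D ∧ H ⊆ D

section EdgeRegular

variable [Fintype V] {k l n e : ℕ}

lemma card_filter_compl_adj_add_card_sdiff {D T : Finset V} (hD : G.IsClique (D : Set V))
    (hT : T ⊆ D) :
    #{z ∈ Dᶜ | ∀ t ∈ T, G.Adj z t} + #(D \ T) = #{z | ∀ t ∈ T, G.Adj z t} := by
  have hin : ({z | (∀ t ∈ T, G.Adj z t) ∧ z ∈ D} : Finset V) = D \ T := by
    ext z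
    simp only [mem_filter, mem_univ, true_and, mem_sdiff]
    refine ⟨fun ⟨hz, hzD⟩ => ⟨hzD, fun hzT => G.irrefl (hz z hzT)⟩,
      fun ⟨hzD, hzT⟩ => ⟨fun t ht => hD hzD (hT ht) (ne_of_mem_of_not_mem ht hzT).symm, hzD⟩⟩
  rw [← hin, ← card_filter_add_card_filter_not (s := {z | ∀ t ∈ T, G.Adj z t}) (· ∈ D),
    filter_filter, filter_filter, add_comm]
  congr 2
  ext z
  simp [and_comm]

lemma IsRegularOfDegree.card_filter_adj (hk : G.IsRegularOfDegree k) (x : V) :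
    #{z | G.Adj z x} = k := by
  simp_rw [G.adj_comm _ x]
  rw [← hk x, ← card_neighborFinset_eq_degree, neighborFinset_eq_filter]

lemma card_filter_adj_adj (hl : ∀ x y : V, G.Adj x y → Fintype.card (G.commonNeighbors x y) = l)
    {x y : V} (hxy : G.Adj x y) : #{z | G.Adj z x ∧ G.Adj z y} = l := by
  rw [← hl x y hxy, ← Set.toFinset_card]
  congr 1
  ext z
  simp [mem_commonNeighbors, G.adj_comm z]

lemma card_filter_compl_adj (hk : G.IsRegularOfDegree k) {D : Finset V}
    (hD : G.IsNClique n D) {a : V} (ha : a ∈ D) :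
    #{z ∈ Dᶜ | G.Adj z a} = k - (n - 1) := by
  have h := card_filter_compl_adj_add_card_sdiff hD.isClique (singleton_subset_iff.2 ha)
  rw [card_sdiff_of_subset (singleton_subset_iff.2 ha), hD.card_eq, card_singleton] at h
  simp only [forall_eq, mem_singleton, hk.card_filter_adj] at h
  omega

lemma card_filter_compl_adj_adj
    (hl : ∀ x y : V, G.Adj x y → Fintype.card (G.commonNeighbors x y) = l) {D : Finset V} (hD : G.IsNClique n D) {a b : V} (ha : a ∈ D) (hb : b ∈ D) (hab : a ≠ b) :
    #{z ∈ Dᶜ | G.Adj z a ∧ G.Adj z b} = l - (n - 2) := by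
  have hT : {a, b} ⊆ D := insert_subset ha (singleton_subset_iff.2 hb)
  have h := card_filter_compl_adj_add_card_sdiff hD.isClique hT
  rw [card_sdiff_of_subset hT, hD.card_eq, card_pair hab] at h
  simp only [mem_insert, mem_singleton, forall_eq_or_imp, forall_eq,
    card_filter_adj_adj hl (hD.isClique ha hb hab)] at h
  omega

lemma sum_card_filter_adj (hk : G.IsRegularOfDegree k) {D : Finset V} (hD : G.IsNClique n D) :
    ∑ z ∈ Dᶜ, #{a ∈ D | G.Adj z a} = n * (k - (n - 1)) := by
  calc ∑ z ∈ Dᶜ, #{a ∈ D | G.Adj z a} = ∑ a ∈ D, #{z ∈ Dᶜ | G.Adj z a} := by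
        simp only [card_filter]; exact sum_comm
    _ = ∑ _a ∈ D, (k - (n - 1)) := sum_congr rfl fun a ha => card_filter_compl_adj hk hD ha
    _ = n * (k - (n - 1)) := by rw [sum_const, hD.card_eq, smul_eq_mul]

lemma sum_card_filter_adj_sq (hk : G.IsRegularOfDegree k)
    (hl : ∀ x y : V, G.Adj x y → Fintype.card (G.commonNeighbors x y) = l)
    {D : Finset V} (hD : G.IsNClique n D) :
    ∑ z ∈ Dᶜ, #{a ∈ D | G.Adj z a} ^ 2 =
      n * (k - (n - 1)) + n * (n - 1) * (l - (n - 2)) := by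
  have hrow : ∀ a ∈ D, ∑ b ∈ D, #{z ∈ Dᶜ | G.Adj z a ∧ G.Adj z b} =
      k - (n - 1) + (n - 1) * (l - (n - 2)) := fun a ha => by
    rw [← add_sum_erase _ _ ha, sum_congr rfl fun b hb =>
      card_filter_compl_adj_adj hl hD ha (mem_of_mem_erase hb) (ne_of_mem_erase hb).symm,
      sum_const, card_erase_of_mem ha, hD.card_eq, smul_eq_mul]
    simp only [and_self, card_filter_compl_adj hk hD ha]
  calc ∑ z ∈ Dᶜ, #{a ∈ D | G.Adj z a} ^ 2
      = ∑ z ∈ Dᶜ, ∑ a ∈ D, ∑ b ∈ D, if G.Adj z a ∧ G.Adj z b then 1 else 0 := by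
        simp only [card_filter, sq, sum_mul_sum, ite_zero_mul_ite_zero, mul_one]
    _ = ∑ a ∈ D, ∑ b ∈ D, #{z ∈ Dᶜ | G.Adj z a ∧ G.Adj z b} := by
        simp only [card_filter]
        rw [sum_comm]
        exact sum_congr rfl fun a _ => sum_comm
    _ = n * (k - (n - 1)) + n * (n - 1) * (l - (n - 2)) := by
        rw [sum_congr rfl hrow, sum_const, hD.card_eq, smul_eq_mul]
        ring

theorem cliquesRegular_of_isNClique (hk : G.IsRegularOfDegree k)
    (hl : ∀ x y : V, G.Adj x y → Fintype.card (G.commonNeighbors x y) = l)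
    {C : Finset V} (hC : G.IsNClique n C) (hCreg : ∀ z ∉ C, #{a ∈ C | G.Adj z a} = e) :
    G.CliquesRegular n e := by
  intro D hD z hz
  have hvar := sum_sub_sq_eq_of_moments_eq (s := Cᶜ) (t := Dᶜ)
    (f := fun w => #{a ∈ C | G.Adj w a}) (g := fun w => #{a ∈ D | G.Adj w a}) (e : ℤ)
    (by rw [card_compl, card_compl, hC.card_eq, hD.card_eq])
    (by rw [sum_card_filter_adj hk hC, sum_card_filter_adj hk hD])
    (by rw [sum_card_filter_adj_sq hk hl hC, sum_card_filter_adj_sq hk hl hD])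
  rw [sum_eq_zero fun w hw => by rw [hCreg w (mem_compl.1 hw), sub_self, sq, mul_zero],
    eq_comm, sum_eq_zero_iff_of_nonneg fun _ _ => sq_nonneg _] at hvar
  have := hvar z (mem_compl.2 hz)
  rw [sq_eq_zero_iff, sub_eq_zero] at this
  exact_mod_cast this

end EdgeRegular

section CliqueDesign

variable {s e : ℕ} {D D' H : Finset V} {y z : V}

lemma isClique_insert_filter_adj (hD : G.IsClique (D : Set V)) (z : V) :
    G.IsClique ((insert z {a ∈ D | G.Adj z a} : Finset V) : Set V) := by
  rw [coe_insert]
  exact (hD.subset (coe_subset.2 (filter_subset _ _))).insert fun a ha _ => (mem_filter.1 ha).2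

/-- The `n`-clique through `z` and its neighbours in `D`: it exists and is unique under
`CliquesRegular G n e` and `CliquesExtend G (e + 1) n`, and is junk otherwise. -/
noncomputable def pivotClique (G : SimpleGraph V) (n : ℕ) (D : Finset V) (z : V) : Finset V :=
  Classical.epsilon fun D' => G.IsNClique n D' ∧ insert z {a ∈ D | G.Adj z a} ⊆ D'

lemma CliquesRegular.eq_of_subset (hreg : G.CliquesRegular (s + 1) e)
    (hD : G.IsNClique (s + 1) D) (hD' : G.IsNClique (s + 1) D') (hH : #H = e + 1)
    (hHD : H ⊆ D) (hHD' : H ⊆ D') : D = D' := by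
  by_contra hne
  obtain ⟨z, hzD', hzD⟩ := not_subset.1 fun h : D' ⊆ D =>
    hne (eq_of_subset_of_card_le h (by rw [hD.card_eq, hD'.card_eq])).symm
  have hsub : H ⊆ {a ∈ D | G.Adj z a} := fun a ha => mem_filter.2
    ⟨hHD ha, hD'.isClique hzD' (hHD' ha) fun h => hzD (h ▸ hHD ha)⟩
  have := card_le_card hsub
  rw [hreg D hD z hzD, hH] at this
  omega

lemma isNClique_insert_filter_adj (hreg : G.CliquesRegular (s + 1) e)
    (hD : G.IsNClique (s + 1) D) (hz : z ∉ D) :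
    G.IsNClique (e + 1) (insert z {a ∈ D | G.Adj z a}) :=
  ⟨isClique_insert_filter_adj hD.isClique z, by
    rw [card_insert_of_notMem fun h => hz (mem_filter.1 h).1, hreg D hD z hz]⟩

lemma pivotClique_spec (hreg : G.CliquesRegular (s + 1) e) (hext : G.CliquesExtend (e + 1) (s + 1))
    (hD : G.IsNClique (s + 1) D) (hz : z ∉ D) :
    G.IsNClique (s + 1) (G.pivotClique (s + 1) D z) ∧
      insert z {a ∈ D | G.Adj z a} ⊆ G.pivotClique (s + 1) D z :=
  Classical.epsilon_spec (hext _ (isNClique_insert_filter_adj hreg hD hz))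

lemma pivotClique_eq (hreg : G.CliquesRegular (s + 1) e) (hext : G.CliquesExtend (e + 1) (s + 1))
    (hD : G.IsNClique (s + 1) D) (hz : z ∉ D) (hD' : G.IsNClique (s + 1) D')
    (hsub : insert z {a ∈ D | G.Adj z a} ⊆ D') : G.pivotClique (s + 1) D z = D' :=
  hreg.eq_of_subset (pivotClique_spec hreg hext hD hz).1 hD'
    (isNClique_insert_filter_adj hreg hD hz).card_eq (pivotClique_spec hreg hext hD hz).2 hsub

lemma CliquesRegular.filter_adj_eq (hreg : G.CliquesRegular (s + 1) e)
    (hD : G.IsNClique (s + 1) D) (hD' : G.IsNClique (s + 1) D') (hy : y ∉ D) (hzD : z ∈ D)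
    (hzD' : z ∉ D') (hsub : {a ∈ D | G.Adj y a} ⊆ D') :
    {a ∈ D' | G.Adj z a} = {a ∈ D | G.Adj y a} := by
  refine (eq_of_subset_of_card_le (fun a ha => ?_) ?_).symm
  · have haD := (mem_filter.1 ha).1
    exact mem_filter.2 ⟨hsub ha, hD.isClique hzD haD fun h => hzD' (h ▸ hsub ha)⟩
  · rw [hreg D' hD' z hzD', hreg D hD y hy]

lemma pivotClique_pivotClique (hreg : G.CliquesRegular (s + 1) e)
    (hext : G.CliquesExtend (e + 1) (s + 1)) (hD : G.IsNClique (s + 1) D) (hy : y ∉ D)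
    (hzD : z ∈ D) (hz : z ∉ G.pivotClique (s + 1) D y) :
    G.pivotClique (s + 1) (G.pivotClique (s + 1) D y) z = D := by
  obtain ⟨hP, hyP⟩ := pivotClique_spec hreg hext hD hy
  refine pivotClique_eq hreg hext hP hz hD ?_
  rw [hreg.filter_adj_eq hD hP hy hzD hz ((subset_insert _ _).trans hyP)]
  exact insert_subset hzD (filter_subset _ _)

lemma card_sdiff_pivotClique (hreg : G.CliquesRegular (s + 1) e)
    (hext : G.CliquesExtend (e + 1) (s + 1)) (hD : G.IsNClique (s + 1) D) (hy : y ∉ D) :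
    #(D \ G.pivotClique (s + 1) D y) = s + 1 - e := by
  obtain ⟨hP, hyP⟩ := pivotClique_spec hreg hext hD hy
  have hinter : G.pivotClique (s + 1) D y ∩ D = {a ∈ D | G.Adj y a} := by
    refine Subset.antisymm (fun a ha => ?_) (subset_inter ((subset_insert _ _).trans hyP)
      (filter_subset _ _))
    obtain ⟨haP, haD⟩ := mem_inter.1 ha
    exact mem_filter.2 ⟨haD, hP.isClique (hyP (mem_insert_self _ _)) haP fun h => hy (h ▸ haD)⟩
  rw [card_sdiff, hinter, hreg D hD y hy, hD.card_eq]

lemma insert_subset_pivotClique (hreg : G.CliquesRegular (s + 1) e)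
    (hext : G.CliquesExtend (e + 1) (s + 1)) (hD : G.IsNClique (s + 1) D) (hy : y ∉ D)
    {S : Finset V} (hSD : S ⊆ D) (hS : ∀ a ∈ S, G.Adj y a) :
    insert y S ⊆ G.pivotClique (s + 1) D y := by
  have hyP := (pivotClique_spec hreg hext hD hy).2
  exact insert_subset (hyP (mem_insert_self _ _))
    fun a ha => hyP (mem_insert_of_mem (mem_filter.2 ⟨hSD ha, hS a ha⟩))

lemma not_adj_of_notMem_pivotClique (hreg : G.CliquesRegular (s + 1) e)
    (hext : G.CliquesExtend (e + 1) (s + 1)) (hD : G.IsNClique (s + 1) D) (hy : y ∉ D)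
    (hzD : z ∈ D) (hz : z ∉ G.pivotClique (s + 1) D y) : ¬G.Adj y z := fun h =>
  hz ((pivotClique_spec hreg hext hD hy).2 (mem_insert_of_mem (mem_filter.2 ⟨hzD, h⟩)))

lemma notMem_pivotClique (hreg : G.CliquesRegular (s + 1) e)
    (hext : G.CliquesExtend (e + 1) (s + 1)) (hD : G.IsNClique (s + 1) D) (hz : z ∉ D)
    (hzy : z ≠ y) (hyz : ¬G.Adj y z) : y ∉ G.pivotClique (s + 1) D z := fun h =>
  hyz ((pivotClique_spec hreg hext hD hz).1.isClique
    ((pivotClique_spec hreg hext hD hz).2 (mem_insert_self _ _)) h hzy).symm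

end CliqueDesign

variable [Fintype V] {k l s e : ℕ}

/-- The pairs `(D, z)` on the left correspond to the pairs `(D', z)` on the right through
`D' = pivotClique D y` and `D = pivotClique D' z`. -/
theorem card_sigma_sdiff_pivotClique {y : V} (hreg : G.CliquesRegular (s + 1) e)
    (hext : G.CliquesExtend (e + 1) (s + 1)) {S : Finset V} (hS : ∀ a ∈ S, G.Adj y a) :
    #({D ∈ G.cliqueFinset (s + 1) | S ⊆ D ∧ y ∉ D}.sigma
        fun D => D \ G.pivotClique (s + 1) D y) =
      #{D ∈ G.cliqueFinset (s + 1) | insert y S ⊆ D} *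
        #{z | z ≠ y ∧ ¬G.Adj y z ∧ ∀ a ∈ S, G.Adj a z} := by
  rw [← card_product]
  refine card_nbij' (fun p => (G.pivotClique (s + 1) p.1 y, p.2))
    (fun q => ⟨G.pivotClique (s + 1) q.1 q.2, q.2⟩) ?_ ?_ ?_ ?_
  all_goals simp only [Set.MapsTo, Set.LeftInvOn, Sigma.forall, Prod.forall, coe_sigma,
    coe_product, Set.mem_sigma_iff, Set.mem_prod, coe_filter, mem_cliqueFinset_iff, coe_sdiff,
    Set.mem_sdiff, Set.mem_ofPred_eq, mem_coe, mem_univ, true_and, Sigma.mk.injEq, Prod.mk.injEq,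
    heq_eq_eq, and_true]
  · rintro D z ⟨⟨hD, hSD, hyD⟩, hzD, hzP⟩
    have hSP := insert_subset_pivotClique hreg hext hD hyD hSD hS
    exact ⟨⟨(pivotClique_spec hreg hext hD hyD).1, hSP⟩, fun h => hyD (h ▸ hzD),
      not_adj_of_notMem_pivotClique hreg hext hD hyD hzD hzP,
      fun a ha => hD.isClique (hSD ha) hzD fun h => hzP (h ▸ hSP (mem_insert_of_mem ha))⟩
  · rintro D' z ⟨⟨hD', hySD'⟩, hzy, hyz, hSz⟩
    obtain ⟨hyD', hSD'⟩ := insert_subset_iff.1 hySD'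
    have hzD' : z ∉ D' := fun h => hyz (hD'.isClique hyD' h hzy.symm)
    obtain ⟨hP, hzP⟩ := pivotClique_spec hreg hext hD' hzD'
    have hyP := notMem_pivotClique hreg hext hD' hzD' hzy hyz
    refine ⟨⟨hP, ((subset_insert _ _).trans (insert_subset_pivotClique hreg hext hD' hzD' hSD'
      fun a ha => (hSz a ha).symm)), hyP⟩, hzP (mem_insert_self _ _), ?_⟩
    rwa [pivotClique_pivotClique hreg hext hD' hzD' hyD' hyP]
  · rintro D z ⟨⟨hD, -, hyD⟩, hzD, hzP⟩
    exact pivotClique_pivotClique hreg hext hD hyD hzD hzP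
  · rintro D' z ⟨⟨hD', hySD'⟩, hzy, hyz, -⟩
    have hyD' := (insert_subset_iff.1 hySD').1
    have hzD' : z ∉ D' := fun h => hyz (hD'.isClique hyD' h hzy.symm)
    exact pivotClique_pivotClique hreg hext hD' hzD' hyD'
      (notMem_pivotClique hreg hext hD' hzD' hzy hyz)

theorem card_filter_insert_subset_mul {y : V} (hreg : G.CliquesRegular (s + 1) e)
    (hext : G.CliquesExtend (e + 1) (s + 1)) {S : Finset V} (hS : ∀ a ∈ S, G.Adj y a) :
    #{D ∈ G.cliqueFinset (s + 1) | insert y S ⊆ D} *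
        (#{z | z ≠ y ∧ ¬G.Adj y z ∧ ∀ a ∈ S, G.Adj a z} + (s + 1 - e)) =
      #{D ∈ G.cliqueFinset (s + 1) | S ⊆ D} * (s + 1 - e) := by
  have hmissing : #{D ∈ G.cliqueFinset (s + 1) | S ⊆ D ∧ y ∉ D} * (s + 1 - e) =
      #({D ∈ G.cliqueFinset (s + 1) | S ⊆ D ∧ y ∉ D}.sigma
        fun D => D \ G.pivotClique (s + 1) D y) := by
    rw [card_sigma, sum_congr rfl fun D hD => card_sdiff_pivotClique hreg hext
      (mem_cliqueFinset_iff.1 (mem_filter.1 hD).1) (mem_filter.1 hD).2.2, sum_const, smul_eq_mul]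
  have hsplit := card_filter_add_card_filter_not (s := {D ∈ G.cliqueFinset (s + 1) | S ⊆ D})
    (y ∉ ·)
  simp only [filter_filter, not_not] at hsplit
  rw [← hsplit, mul_add, add_mul, hmissing, card_sigma_sdiff_pivotClique hreg hext hS]
  simp only [insert_subset_iff, and_comm]

theorem card_filter_ne_not_adj (hk : G.IsRegularOfDegree k) (x : V) :
    #{z | z ≠ x ∧ ¬G.Adj x z} = Fintype.card V - 1 - k := by
  rw [← hk x, ← degree_compl, ← card_neighborFinset_eq_degree, neighborFinset_eq_filter]
  simp [compl_adj, eq_comm]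

theorem card_filter_ne_not_adj_adj (hk : G.IsRegularOfDegree k)
    (hl : ∀ x y : V, G.Adj x y → Fintype.card (G.commonNeighbors x y) = l) {x y : V}
    (hxy : G.Adj x y) : #{z | z ≠ y ∧ ¬G.Adj y z ∧ G.Adj x z} = k - 1 - l := by
  have hsplit := card_filter_add_card_filter_not (s := {z | G.Adj z x}) (G.Adj · y)
  have hins : ({z | G.Adj z x ∧ ¬G.Adj z y} : Finset V) =
      insert y ({z | z ≠ y ∧ ¬G.Adj y z ∧ G.Adj x z} : Finset V) := by
    ext z
    by_cases hz : z = y <;> simp [hz, hxy.symm, and_comm, G.adj_comm z]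
  simp only [filter_filter] at hsplit
  rw [hk.card_filter_adj, card_filter_adj_adj hl hxy, hins, card_insert_of_notMem (by simp)]
    at hsplit
  omega

lemma CliquesExtend.le_of_isClique (hext : G.CliquesExtend (e + 1) (s + 1)) (hG : G ≠ ⊤)
    {C : Finset V} (hC : G.IsClique (C : Set V)) (hCreg : ∀ z ∉ C, #{a ∈ C | G.Adj z a} = e) :
    e ≤ s := by
  obtain ⟨u, hu⟩ : ∃ u, u ∉ C := by
    by_contra! h
    exact hG (isClique_univ.1 (hC.subset fun a _ => h a))
  obtain ⟨D, hD, hsub⟩ := hext _ ⟨isClique_insert_filter_adj hC u, by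
    rw [card_insert_of_notMem fun h => hu (mem_filter.1 h).1, hCreg u hu]⟩
  have := card_le_card hsub
  rw [hD.card_eq, card_insert_of_notMem fun h => hu (mem_filter.1 h).1, hCreg u hu] at this
  omega

theorem card_filter_mem_cliqueFinset
    (hk : G.IsRegularOfDegree k) (hreg : G.CliquesRegular (s + 1) e)
    (hext : G.CliquesExtend (e + 1) (s + 1)) (hes : e ≤ s) (x : V) :
    #{D ∈ G.cliqueFinset (s + 1) | x ∈ D} =
      #(G.cliqueFinset (s + 1)) * (s + 1 - e) / (Fintype.card V - 1 - k + (s + 1 - e)) := by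
  refine Nat.eq_div_of_mul_eq_left (by omega) ?_
  simpa [card_filter_ne_not_adj hk x] using
    card_filter_insert_subset_mul hreg hext (y := x) (S := ∅) (by simp)

theorem card_filter_mem_mem_cliqueFinset (hk : G.IsRegularOfDegree k)
    (hl : ∀ x y : V, G.Adj x y → Fintype.card (G.commonNeighbors x y) = l)
    (hreg : G.CliquesRegular (s + 1) e) (hext : G.CliquesExtend (e + 1) (s + 1)) (hes : e ≤ s)
    {x y : V} (hxy : G.Adj x y) :
    #{D ∈ G.cliqueFinset (s + 1) | x ∈ D ∧ y ∈ D} =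
      #{D ∈ G.cliqueFinset (s + 1) | x ∈ D} * (s + 1 - e) / (k - 1 - l + (s + 1 - e)) := by
  refine Nat.eq_div_of_mul_eq_left (by omega) ?_
  have h := card_filter_insert_subset_mul hreg hext (y := y) (S := {x}) (by simpa using hxy.symm)
  simp only [mem_singleton, forall_eq] at h
  rw [card_filter_ne_not_adj_adj hk hl hxy] at h
  simpa [insert_subset_iff, and_comm] using h

end SimpleGraph

theorem stmt6_general [Fintype V] (G : SimpleGraph V) (v k l s e : ℕ)
    (hER : IsEdgeRegular G v k l) (hnc : G ≠ ⊤)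
    (C : Finset V) (hC : IsRegularCliqueWith G C e) (hCcard : C.card = s + 1)
    (hext : ∀ H : Finset V, G.IsNClique (e + 1) H → ∃ D : Finset V, G.IsNClique (s + 1) D ∧ H ⊆ D) :
    ∃ N : ℕ, ∀ x y : V, G.Adj x y →
      (Finset.univ.filter (fun D : Finset V => G.IsNClique (s + 1) D ∧ x ∈ D ∧ y ∈ D)).card = N := by
  obtain ⟨-, hk, hl⟩ := hER
  have hreg := SimpleGraph.cliquesRegular_of_isNClique hk hl ⟨hC.1, hCcard⟩ hC.2.2
  have hes : e ≤ s := SimpleGraph.CliquesExtend.le_of_isClique hext hnc hC.1 hC.2.2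
  refine ⟨#(G.cliqueFinset (s + 1)) * (s + 1 - e) / (Fintype.card V - 1 - k + (s + 1 - e)) *
    (s + 1 - e) / (k - 1 - l + (s + 1 - e)), fun x y hxy => ?_⟩
  rw [← SimpleGraph.card_filter_mem_cliqueFinset hk hreg hext hes x,
    ← SimpleGraph.card_filter_mem_mem_cliqueFinset hk hl hreg hext hes hxy]
  congr 1
  ext D
  simp [SimpleGraph.mem_cliqueFinset_iff]

/-- In a Neumaier graph with an `e`-regular clique of order `s + 1`, if every
clique of order `e + 1` is contained in a clique of order `s + 1`, then the number of cliques
of order `s + 1` containing a given edge is the same for all edges. -/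
theorem stmt6 [Fintype V] (G : SimpleGraph V) (v k l s e : ℕ)
    (hER : IsEdgeRegular G v k l) (hnc : G ≠ ⊤) (hs : 0 < s) (he : 0 < e)
    (C : Finset V) (hC : IsRegularCliqueWith G C e) (hCcard : C.card = s + 1)
    (hext : ∀ H : Finset V, G.IsNClique (e + 1) H → ∃ D : Finset V, G.IsNClique (s + 1) D ∧ H ⊆ D) :
    ∃ N : ℕ, ∀ x y : V, G.Adj x y →
      (Finset.univ.filter (fun D : Finset V => G.IsNClique (s + 1) D ∧ x ∈ D ∧ y ∈ D)).card = N :=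
  stmt6_general G v k l s e hER hnc C hC hCcard hext
end

section
/- Let Γ be a Neumaier graph containing an e-regular clique of order s+1 (s, e positive integers), and suppose that every clique of Γ of order e+1 is contained in a clique of order s+1. Then the number of cliques of order s+1 containing a given vertex is the same for all vertices of Γ. -/
open scoped Classical
open Matrix

variable {V : Type*}

section Stmt7Aux

open Finset SimpleGraph

variable [Fintype V] {G : SimpleGraph V} {v k l s e : ℕ}

private lemma deg_card' (hreg : G.IsRegularOfDegree k) (z : V) :
    (Finset.univ.filter (fun w => G.Adj w z)).card = k := by
  have h : (Finset.univ.filter (fun w => G.Adj w z)) = G.neighborFinset z := by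
    ext w
    simp only [mem_filter, mem_univ, true_and, SimpleGraph.mem_neighborFinset]
    exact ⟨SimpleGraph.Adj.symm, SimpleGraph.Adj.symm⟩
  rw [h]
  exact hreg z

private lemma common_card'
    (hl : ∀ x y : V, G.Adj x y → Fintype.card (G.commonNeighbors x y) = l)
    {z z' : V} (hzz : G.Adj z z') :
    (Finset.univ.filter (fun w => G.Adj w z ∧ G.Adj w z')).card = l := by
  calc (Finset.univ.filter (fun w => G.Adj w z ∧ G.Adj w z')).card
      = Fintype.card { w : V // G.Adj w z ∧ G.Adj w z' } := (Fintype.card_subtype _).symm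
    _ = Fintype.card (G.commonNeighbors z z') := by
        refine Fintype.card_congr (Equiv.subtypeEquivRight ?_)
        intro w
        rw [SimpleGraph.mem_commonNeighbors]
        exact ⟨fun hh => ⟨hh.1.symm, hh.2.symm⟩, fun hh => ⟨hh.1.symm, hh.2.symm⟩⟩
    _ = l := hl z z' hzz

private lemma line_reg
    (hreg : G.IsRegularOfDegree k)
    (hl : ∀ x y : V, G.Adj x y → Fintype.card (G.commonNeighbors x y) = l)
    (hv : Fintype.card V = v)
    (hs : 0 < s)
    {C : Finset V} (hC : IsRegularCliqueWith G C e) (hCcard : C.card = s + 1)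
    {D : Finset V} (hD : G.IsNClique (s + 1) D) {w : V} (hw : w ∉ D) :
    (D.filter (fun z => G.Adj w z)).card = e := by
  -- generic double counts for any (s+1)-clique
  have key : ∀ D' : Finset V, G.IsNClique (s+1) D' →
      ((∑ u ∈ D'ᶜ, ((D'.filter (fun z => G.Adj u z)).card : ℤ)) = (s+1) * ((k:ℤ) - s) ∧
       (∑ u ∈ D'ᶜ, ((D'.filter (fun z => G.Adj u z)).card : ℤ)^2)
        = (s+1) * ((k:ℤ) - s) + ((s+1)*s) * ((l:ℤ) - s + 1)) := by
    intro D' hD'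
    have hcard : ∀ u : V, ((D'.filter (fun z => G.Adj u z)).card : ℤ)
        = ∑ z ∈ D', (if G.Adj u z then (1:ℤ) else 0) := by
      intro u
      rw [Finset.card_filter]
      push_cast
      rfl
    have hdegz : ∀ z ∈ D', (∑ u ∈ D'ᶜ, (if G.Adj u z then (1:ℤ) else 0)) = (k:ℤ) - s := by
      intro z hz
      have htot : (∑ u : V, (if G.Adj u z then (1:ℤ) else 0)) = k := by
        rw [Finset.sum_boole]
        exact_mod_cast deg_card' hreg z
      have hin : (∑ u ∈ D', (if G.Adj u z then (1:ℤ) else 0)) = s := by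
        rw [Finset.sum_boole]
        have h2 : D'.filter (fun u => G.Adj u z) = D'.erase z := by
          ext u
          simp only [mem_filter, mem_erase]
          exact ⟨fun h => ⟨h.2.ne, h.1⟩, fun h => ⟨h.2, hD'.1 h.2 hz h.1⟩⟩
        rw [h2, Finset.card_erase_of_mem hz, hD'.2]
        simp
      have hsplit := Finset.sum_add_sum_compl D' (fun u => if G.Adj u z then (1:ℤ) else 0)
      rw [hin, htot] at hsplit
      linarith
    have hpair : ∀ z ∈ D', ∀ z' ∈ D', z' ≠ z →
        (∑ u ∈ D'ᶜ, (if G.Adj u z then (1:ℤ) else 0) * (if G.Adj u z' then 1 else 0))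
          = (l:ℤ) - s + 1 := by
      intro z hz z' hz' hne
      have hadj : G.Adj z z' := hD'.1 hz hz' (Ne.symm hne)
      have hfun : ∀ u : V, (if G.Adj u z then (1:ℤ) else 0) * (if G.Adj u z' then 1 else 0)
          = if (G.Adj u z ∧ G.Adj u z') then (1:ℤ) else 0 := by
        intro u; by_cases h1 : G.Adj u z <;> by_cases h2 : G.Adj u z' <;> simp [h1, h2]
      have htot : (∑ u : V, if (G.Adj u z ∧ G.Adj u z') then (1:ℤ) else 0) = l := by
        rw [Finset.sum_boole]
        exact_mod_cast common_card' hl hadj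
      have hin : (∑ u ∈ D', if (G.Adj u z ∧ G.Adj u z') then (1:ℤ) else 0) = (s:ℤ) - 1 := by
        rw [Finset.sum_boole]
        have h2 : D'.filter (fun u => G.Adj u z ∧ G.Adj u z') = (D'.erase z).erase z' := by
          ext u
          simp only [mem_filter, mem_erase]
          constructor
          · rintro ⟨hu, h1, h2⟩; exact ⟨h2.ne, h1.ne, hu⟩
          · rintro ⟨hu1, hu2, hu⟩; exact ⟨hu, hD'.1 hu hz hu2, hD'.1 hu hz' hu1⟩
        have hz'' : z' ∈ D'.erase z := Finset.mem_erase.mpr ⟨hne, hz'⟩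
        rw [h2, Finset.card_erase_of_mem hz'', Finset.card_erase_of_mem hz, hD'.2]
        have : (s + 1 - 1 - 1 : ℕ) = s - 1 := by omega
        rw [this]
        omega
      have hsplit := Finset.sum_add_sum_compl D'
        (fun u => if (G.Adj u z ∧ G.Adj u z') then (1:ℤ) else 0)
      rw [hin, htot] at hsplit
      have : (∑ u ∈ D'ᶜ, if (G.Adj u z ∧ G.Adj u z') then (1:ℤ) else 0) = (l:ℤ) - s + 1 := by
        linarith
      rw [← this]
      exact Finset.sum_congr rfl (fun u _ => hfun u)
    constructor
    · calc ∑ u ∈ D'ᶜ, ((D'.filter (fun z => G.Adj u z)).card : ℤ)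
          = ∑ u ∈ D'ᶜ, ∑ z ∈ D', (if G.Adj u z then (1:ℤ) else 0) :=
            Finset.sum_congr rfl (fun u _ => hcard u)
        _ = ∑ z ∈ D', ∑ u ∈ D'ᶜ, (if G.Adj u z then (1:ℤ) else 0) := Finset.sum_comm
        _ = ∑ _z ∈ D', ((k:ℤ) - s) := Finset.sum_congr rfl hdegz
        _ = (s+1) * ((k:ℤ) - s) := by
            rw [Finset.sum_const, hD'.2, nsmul_eq_mul]
            push_cast
            ring
    · calc ∑ u ∈ D'ᶜ, ((D'.filter (fun z => G.Adj u z)).card : ℤ)^2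
          = ∑ u ∈ D'ᶜ, ∑ z ∈ D', ∑ z' ∈ D',
              (if G.Adj u z then (1:ℤ) else 0) * (if G.Adj u z' then 1 else 0) := by
            refine Finset.sum_congr rfl (fun u _ => ?_)
            rw [hcard u, sq, Finset.sum_mul_sum]
        _ = ∑ z ∈ D', ∑ u ∈ D'ᶜ, ∑ z' ∈ D',
              (if G.Adj u z then (1:ℤ) else 0) * (if G.Adj u z' then 1 else 0) := Finset.sum_comm
        _ = ∑ z ∈ D', ∑ z' ∈ D', ∑ u ∈ D'ᶜ,
              (if G.Adj u z then (1:ℤ) else 0) * (if G.Adj u z' then 1 else 0) :=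
            Finset.sum_congr rfl (fun z _ => Finset.sum_comm)
        _ = ∑ z ∈ D', (((k:ℤ) - s) + (s:ℤ) * ((l:ℤ) - s + 1)) := by
            refine Finset.sum_congr rfl (fun z hz => ?_)
            rw [← Finset.add_sum_erase _ _ hz]
            congr 1
            · have hdiag : ∀ u : V,
                  (if G.Adj u z then (1:ℤ) else 0) * (if G.Adj u z then 1 else 0)
                    = (if G.Adj u z then (1:ℤ) else 0) := by
                intro u; by_cases h1 : G.Adj u z <;> simp [h1]
              rw [Finset.sum_congr rfl (fun u _ => hdiag u)]
              exact hdegz z hz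
            · rw [Finset.sum_congr rfl (fun z' hz' =>
                hpair z hz z' (Finset.mem_of_mem_erase hz') (Finset.ne_of_mem_erase hz'))]
              rw [Finset.sum_const, Finset.card_erase_of_mem hz, hD'.2, nsmul_eq_mul]
              norm_num
        _ = (s+1) * ((k:ℤ) - s) + ((s+1)*s) * ((l:ℤ) - s + 1) := by
            rw [Finset.sum_const, hD'.2, nsmul_eq_mul]
            push_cast
            ring
  obtain ⟨k1D, k2D⟩ := key D hD
  obtain ⟨k1C, k2C⟩ := key C ⟨hC.1, hCcard⟩
  have hCt : ∀ u ∈ Cᶜ, ((C.filter (fun z => G.Adj u z)).card : ℤ) = e := by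
    intro u hu
    rw [hC.2.2 u (Finset.mem_compl.mp hu)]
  have hsv : s + 1 ≤ v := by
    rw [← hv, ← hCcard]
    exact Finset.card_le_univ C
  have hCcompl : ((Cᶜ : Finset V).card : ℤ) = (v:ℤ) - s - 1 := by
    rw [Finset.card_compl, hCcard, hv]
    omega
  have hDcompl : ((Dᶜ : Finset V).card : ℤ) = (v:ℤ) - s - 1 := by
    rw [Finset.card_compl, hD.2, hv]
    omega
  have e1 : ((v:ℤ) - s - 1) * e = (s+1) * ((k:ℤ) - s) := by
    rw [← k1C, Finset.sum_congr rfl hCt, Finset.sum_const, nsmul_eq_mul, hCcompl]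
  have e2 : ((v:ℤ) - s - 1) * (e:ℤ)^2 = (s+1) * ((k:ℤ) - s) + ((s+1)*s) * ((l:ℤ) - s + 1) := by
    rw [← k2C]
    rw [Finset.sum_congr rfl (fun u hu => by rw [hCt u hu] : ∀ u ∈ Cᶜ,
      ((C.filter (fun z => G.Adj u z)).card : ℤ)^2 = (e:ℤ)^2)]
    rw [Finset.sum_const, nsmul_eq_mul, hCcompl]
  have hvar : ∑ u ∈ Dᶜ, (((D.filter (fun z => G.Adj u z)).card : ℤ) - e)^2 = 0 := by
    have expand : ∑ u ∈ Dᶜ, (((D.filter (fun z => G.Adj u z)).card : ℤ) - e)^2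
        = (∑ u ∈ Dᶜ, ((D.filter (fun z => G.Adj u z)).card : ℤ)^2)
          - 2*(e:ℤ)*(∑ u ∈ Dᶜ, ((D.filter (fun z => G.Adj u z)).card : ℤ))
          + ((Dᶜ : Finset V).card : ℤ) * (e:ℤ)^2 := by
      have hconst : ((Dᶜ : Finset V).card : ℤ) * (e:ℤ)^2 = ∑ _u ∈ Dᶜ, (e:ℤ)^2 := by
        rw [Finset.sum_const, nsmul_eq_mul]
      rw [Finset.mul_sum, ← Finset.sum_sub_distrib, hconst, ← Finset.sum_add_distrib]
      exact Finset.sum_congr rfl (fun u _ => by ring)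
    rw [expand, k1D, k2D, hDcompl]
    linear_combination (2*(e:ℤ))*e1 - e2
  have hall := (Finset.sum_eq_zero_iff_of_nonneg (fun u _ => sq_nonneg _)).mp hvar
  have hwz := hall w (Finset.mem_compl.mpr hw)
  have : ((D.filter (fun z => G.Adj w z)).card : ℤ) = e := by
    have := pow_eq_zero_iff (n := 2) (by norm_num) |>.mp hwz
    linarith
  exact_mod_cast this

private lemma line_unique
    (hreg : G.IsRegularOfDegree k)
    (hl : ∀ x y : V, G.Adj x y → Fintype.card (G.commonNeighbors x y) = l)
    (hv : Fintype.card V = v) (hs : 0 < s)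
    {C : Finset V} (hC : IsRegularCliqueWith G C e) (hCcard : C.card = s + 1)
    {K D₁ D₂ : Finset V}
    (hK : G.IsNClique (e+1) K) (h₁ : G.IsNClique (s+1) D₁) (h₂ : G.IsNClique (s+1) D₂)
    (hK1 : K ⊆ D₁) (hK2 : K ⊆ D₂) : D₁ = D₂ := by
  by_contra hne
  have hnsub : ¬ (D₂ ⊆ D₁) := by
    intro hsub
    exact hne (Finset.eq_of_subset_of_card_le hsub (by rw [h₁.2, h₂.2])).symm
  obtain ⟨w, hw2, hw1⟩ := Finset.not_subset.mp hnsub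
  have hregD : (D₁.filter (fun z => G.Adj w z)).card = e :=
    line_reg hreg hl hv hs hC hCcard h₁ hw1
  have hsub : K ⊆ D₁.filter (fun z => G.Adj w z) := by
    intro z hz
    refine Finset.mem_filter.mpr ⟨hK1 hz, ?_⟩
    exact h₂.1 hw2 (hK2 hz) (by rintro rfl; exact hw1 (hK1 hz))
  have hle := Finset.card_le_card hsub
  rw [hK.2, hregD] at hle
  omega

private lemma lines_eq_of_nonadj
    (hreg : G.IsRegularOfDegree k)
    (hl : ∀ x y : V, G.Adj x y → Fintype.card (G.commonNeighbors x y) = l)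
    (hv : Fintype.card V = v) (hs : 0 < s)
    {C : Finset V} (hC : IsRegularCliqueWith G C e) (hCcard : C.card = s + 1)
    (hext : ∀ H : Finset V, G.IsNClique (e + 1) H →
      ∃ D : Finset V, G.IsNClique (s + 1) D ∧ H ⊆ D)
    {x y : V} (hxy : ¬ G.Adj x y) (hne : x ≠ y) :
    (Finset.univ.filter (fun D : Finset V => G.IsNClique (s+1) D ∧ x ∈ D)).card
      = (Finset.univ.filter (fun D : Finset V => G.IsNClique (s+1) D ∧ y ∈ D)).card := by
  have half : ∀ x y : V, ¬ G.Adj x y → x ≠ y →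
      (Finset.univ.filter (fun D : Finset V => G.IsNClique (s+1) D ∧ x ∈ D)).card
        = (Finset.univ.filter (fun S : Finset V =>
            G.IsNClique e S ∧ ∀ z ∈ S, G.Adj x z ∧ G.Adj y z)).card := by
    clear hxy hne x y
    intro x y hxy hne
    refine Finset.card_bij (fun D _ => D.filter (fun z => G.Adj y z)) ?_ ?_ ?_
    · rintro D hD
      rw [Finset.mem_filter] at hD
      obtain ⟨-, hDc, hxD⟩ := hD
      have hyD : y ∉ D := fun h => hxy (hDc.1 hxD h hne)
      rw [Finset.mem_filter]
      refine ⟨Finset.mem_univ _, ⟨?_, ?_⟩, ?_⟩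
      · exact hDc.1.subset (by exact_mod_cast Finset.filter_subset _ _)
      · exact line_reg hreg hl hv hs hC hCcard hDc hyD
      · intro z hz
        rw [Finset.mem_filter] at hz
        have hzx : z ≠ x := by rintro rfl; exact hxy hz.2.symm
        exact ⟨hDc.1 hxD hz.1 hzx.symm, hz.2⟩
    · rintro D₁ hD₁ D₂ hD₂ heq
      rw [Finset.mem_filter] at hD₁ hD₂
      have hxS : x ∉ D₁.filter (fun z => G.Adj y z) := by
        intro h
        exact hxy ((Finset.mem_filter.mp h).2).symm
      have hy1 : y ∉ D₁ := fun h => hxy (hD₁.2.1.1 hD₁.2.2 h hne)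
      have hScl : G.IsClique ((D₁.filter (fun z => G.Adj y z) : Finset V) : Set V) :=
        hD₁.2.1.1.subset (by exact_mod_cast Finset.filter_subset _ _)
      replace heq : D₁.filter (fun z => G.Adj y z) = D₂.filter (fun z => G.Adj y z) := heq
      have hK : G.IsNClique (e+1) (insert x (D₁.filter (fun z => G.Adj y z))) := by
        constructor
        · rw [Finset.coe_insert]
          refine hScl.insert ?_
          intro z hz hzx
          rw [Finset.mem_coe, Finset.mem_filter] at hz
          exact hD₁.2.1.1 hD₁.2.2 hz.1 hzx
        · rw [Finset.card_insert_of_notMem hxS,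
            line_reg hreg hl hv hs hC hCcard hD₁.2.1 hy1]
      refine line_unique hreg hl hv hs hC hCcard hK hD₁.2.1 hD₂.2.1 ?_ ?_
      · intro u hu
        rcases Finset.mem_insert.mp hu with h | h
        · exact h ▸ hD₁.2.2
        · exact Finset.mem_of_mem_filter u h
      · intro u hu
        rcases Finset.mem_insert.mp hu with h | h
        · exact h ▸ hD₂.2.2
        · rw [heq] at h
          exact Finset.mem_of_mem_filter u h
    · rintro S hS
      rw [Finset.mem_filter] at hS
      obtain ⟨-, hScl, hSadj⟩ := hS
      have hxS : x ∉ S := fun h => G.irrefl (hSadj x h).1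
      have hK : G.IsNClique (e+1) (insert x S) := by
        constructor
        · rw [Finset.coe_insert]
          exact hScl.1.insert (fun z hz _ => (hSadj z hz).1)
        · rw [Finset.card_insert_of_notMem hxS, hScl.2]
      obtain ⟨D, hD, hKD⟩ := hext _ hK
      have hxD : x ∈ D := hKD (Finset.mem_insert_self x S)
      have hyD : y ∉ D := fun h => hxy (hD.1 hxD h hne)
      refine ⟨D, Finset.mem_filter.mpr ⟨Finset.mem_univ _, hD, hxD⟩, ?_⟩
      have hsub : S ⊆ D.filter (fun z => G.Adj y z) := by
        intro z hz
        exact Finset.mem_filter.mpr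
          ⟨hKD (Finset.mem_insert_of_mem hz), (hSadj z hz).2⟩
      refine (Finset.eq_of_subset_of_card_le hsub ?_).symm
      rw [line_reg hreg hl hv hs hC hCcard hD hyD, hScl.2]
  have hsymm : (Finset.univ.filter (fun S : Finset V =>
      G.IsNClique e S ∧ ∀ z ∈ S, G.Adj x z ∧ G.Adj y z))
      = (Finset.univ.filter (fun S : Finset V =>
      G.IsNClique e S ∧ ∀ z ∈ S, G.Adj y z ∧ G.Adj x z)) := by
    apply Finset.filter_congr
    intro S _
    constructor
    · rintro ⟨h1, h2⟩; exact ⟨h1, fun z hz => ⟨(h2 z hz).2, (h2 z hz).1⟩⟩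
    · rintro ⟨h1, h2⟩; exact ⟨h1, fun z hz => ⟨(h2 z hz).2, (h2 z hz).1⟩⟩
  rw [half x y hxy hne, hsymm, ← half y x (fun h => hxy h.symm) hne.symm]

end Stmt7Aux

section Stmt7Main

open Finset SimpleGraph

/-- In a Neumaier graph with an `e`-regular clique of order `s + 1`, if every
clique of order `e + 1` is contained in a clique of order `s + 1`, then the number of cliques
of order `s + 1` containing a given vertex is the same for all vertices. -/
theorem stmt7 [Fintype V] (G : SimpleGraph V) (v k l s e : ℕ)
    (hER : IsEdgeRegular G v k l) (hnc : G ≠ ⊤) (hs : 0 < s) (he : 0 < e)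
    (C : Finset V) (hC : IsRegularCliqueWith G C e) (hCcard : C.card = s + 1)
    (hext : ∀ H : Finset V, G.IsNClique (e + 1) H → ∃ D : Finset V, G.IsNClique (s + 1) D ∧ H ⊆ D) :
    ∃ N : ℕ, ∀ x : V,
      (Finset.univ.filter (fun D : Finset V => G.IsNClique (s + 1) D ∧ x ∈ D)).card = N := by

  classical
  obtain ⟨hv, hreg, hl⟩ := hER
  -- e ≤ s
  have hCne : C ≠ Finset.univ := by
    rintro rfl
    apply hnc
    ext x y
    simp only [SimpleGraph.top_adj]
    exact ⟨fun h => h.ne, fun h => hC.1 (Finset.mem_coe.mpr (Finset.mem_univ x))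
      (Finset.mem_coe.mpr (Finset.mem_univ y)) h⟩
  obtain ⟨w0, hw0⟩ : ∃ w, w ∉ C := by
    by_contra h
    push_neg at h
    exact hCne (Finset.eq_univ_iff_forall.mpr h)
  have hes : e ≤ s := by
    by_contra hgt
    push_neg at hgt
    have htr := hC.2.2 w0 hw0
    have hle : e ≤ s + 1 := by
      rw [← htr, ← hCcard]
      exact Finset.card_filter_le _ _
    have heq : e = s + 1 := by omega
    have hfull : C.filter (fun y => G.Adj w0 y) = C :=
      Finset.eq_of_subset_of_card_le (Finset.filter_subset _ _) (by rw [htr, hCcard, heq])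
    have hK : G.IsNClique (e+1) (insert w0 C) := by
      constructor
      · rw [Finset.coe_insert]
        refine hC.1.insert ?_
        intro b hb _
        have hb' : b ∈ C.filter (fun y => G.Adj w0 y) := by
          rw [hfull]; exact_mod_cast hb
        exact (Finset.mem_filter.mp hb').2
      · rw [Finset.card_insert_of_notMem hw0, hCcard, heq]
    obtain ⟨D, hD, hKD⟩ := hext _ hK
    have hcard := Finset.card_le_card hKD
    rw [hK.2, hD.2] at hcard
    omega
  rcases isEmpty_or_nonempty V with hVe | hVne
  · exact ⟨0, fun x => (hVe.false x).elim⟩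
  obtain ⟨x₀⟩ := hVne
  set L : Finset (Finset V) := Finset.univ.filter (fun D : Finset V => G.IsNClique (s+1) D)
    with hL
  have hmemL : ∀ D : Finset V, D ∈ L → G.IsNClique (s+1) D := by
    intro D hD
    rw [hL, Finset.mem_filter] at hD
    exact hD.2
  -- per-vertex master equation
  have key : ∀ z : V, (s+1) * L.card
      = (L.filter (fun D => z ∈ D)).card
        + (s * (L.filter (fun D => z ∈ D)).card + e * (L.filter (fun D => z ∉ D)).card)
        + ((Finset.univ.erase z).filter (fun y => ¬ G.Adj z y)).card
            * (L.filter (fun D => z ∈ D)).card := by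
    intro z
    -- total count
    have tot : ∑ y : V, (L.filter (fun D => y ∈ D)).card = (s+1) * L.card := by
      rw [Finset.sum_congr rfl (fun y (_ : y ∈ Finset.univ) => Finset.card_filter _ _),
        Finset.sum_comm]
      have h2 : ∀ D ∈ L, (∑ y : V, if y ∈ D then 1 else 0) = s + 1 := by
        intro D hD
        rw [Finset.sum_ite_mem, Finset.univ_inter, Finset.sum_const, smul_eq_mul, mul_one]
        exact (hmemL D hD).2
      rw [Finset.sum_congr rfl h2, Finset.sum_const, smul_eq_mul, mul_comm]
    -- neighbours count
    have adjsum : ∑ y ∈ Finset.univ.filter (fun y => G.Adj z y), (L.filter (fun D => y ∈ D)).card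
        = s * (L.filter (fun D => z ∈ D)).card + e * (L.filter (fun D => z ∉ D)).card := by
      rw [Finset.sum_congr rfl (fun y _ => Finset.card_filter _ _), Finset.sum_comm]
      have h2 : ∀ D ∈ L, (∑ y ∈ Finset.univ.filter (fun y => G.Adj z y), if y ∈ D then 1 else 0)
          = if z ∈ D then s else e := by
        intro D hD
        have hDc := hmemL D hD
        rw [Finset.sum_ite_mem]
        have hinter : (Finset.univ.filter (fun y => G.Adj z y)) ∩ D
            = D.filter (fun y => G.Adj z y) := by
          ext u
          simp only [Finset.mem_inter, Finset.mem_filter, Finset.mem_univ, true_and]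
          exact and_comm
        rw [hinter, Finset.sum_const, smul_eq_mul, mul_one]
        by_cases hzD : z ∈ D
        · rw [if_pos hzD]
          have herase : D.filter (fun y => G.Adj z y) = D.erase z := by
            ext u
            simp only [Finset.mem_filter, Finset.mem_erase]
            exact ⟨fun h => ⟨h.2.ne', h.1⟩, fun h => ⟨h.2, hDc.1 hzD h.2 (Ne.symm h.1)⟩⟩
          rw [herase, Finset.card_erase_of_mem hzD, hDc.2]
          omega
        · rw [if_neg hzD]
          exact line_reg hreg hl hv hs hC hCcard hDc hzD
      rw [Finset.sum_congr rfl h2, Finset.sum_ite, Finset.sum_const, Finset.sum_const,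
        smul_eq_mul, smul_eq_mul, mul_comm, mul_comm ((L.filter (fun D => ¬ z ∈ D)).card) e]
    -- non-neighbours count
    have nonsum : ∑ y ∈ (Finset.univ.erase z).filter (fun y => ¬ G.Adj z y),
          (L.filter (fun D => y ∈ D)).card
        = ((Finset.univ.erase z).filter (fun y => ¬ G.Adj z y)).card
            * (L.filter (fun D => z ∈ D)).card := by
      have h1 : ∀ y ∈ (Finset.univ.erase z).filter (fun y => ¬ G.Adj z y),
          (L.filter (fun D => y ∈ D)).card = (L.filter (fun D => z ∈ D)).card := by
        intro y hy
        rw [Finset.mem_filter, Finset.mem_erase] at hy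
        rw [hL, Finset.filter_filter, Finset.filter_filter]
        exact (lines_eq_of_nonadj hreg hl hv hs hC hCcard hext hy.2 (Ne.symm hy.1.1)).symm
      rw [Finset.sum_congr rfl h1, Finset.sum_const, smul_eq_mul]
    -- splitting the total sum
    have split1 := Finset.add_sum_erase Finset.univ
      (fun y => (L.filter (fun D => y ∈ D)).card) (Finset.mem_univ z)
    have split2 := Finset.sum_filter_add_sum_filter_not (Finset.univ.erase z)
      (fun y => G.Adj z y) (fun y => (L.filter (fun D => y ∈ D)).card)
    have hNz : (Finset.univ.erase z).filter (fun y => G.Adj z y)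
        = Finset.univ.filter (fun y => G.Adj z y) := by
      ext u
      simp only [Finset.mem_filter, Finset.mem_erase, Finset.mem_univ, true_and, and_true]
      exact ⟨fun h => h.2, fun h => ⟨h.ne', h⟩⟩
    rw [hNz] at split2
    rw [← tot, ← split1, ← split2, adjsum, nonsum]
    ring
  -- n z + c z = T
  have hcT : ∀ z : V, (L.filter (fun D => z ∈ D)).card + (L.filter (fun D => z ∉ D)).card
      = L.card := fun z => Finset.card_filter_add_card_filter_not (fun D => z ∈ D)
  -- 1 + k + r z = v
  have hrv : ∀ z : V,
      1 + k + ((Finset.univ.erase z).filter (fun y => ¬ G.Adj z y)).card = v := by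
    intro z
    have h1 : (Finset.univ.erase z).card + 1 = v := by
      rw [Finset.card_erase_add_one (Finset.mem_univ z), Finset.card_univ, hv]
    have h2 := Finset.card_filter_add_card_filter_not
      (s := Finset.univ.erase z) (fun y => G.Adj z y)
    have hNz : (Finset.univ.erase z).filter (fun y => G.Adj z y)
        = Finset.univ.filter (fun y => G.Adj z y) := by
      ext u
      simp only [Finset.mem_filter, Finset.mem_erase, Finset.mem_univ, true_and, and_true]
      exact ⟨fun h => h.2, fun h => ⟨h.ne', h⟩⟩
    have h3 : (Finset.univ.filter (fun y => G.Adj z y)).card = k := by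
      have hnf : Finset.univ.filter (fun y => G.Adj z y) = G.neighborFinset z := by
        ext u
        simp only [Finset.mem_filter, Finset.mem_univ, true_and,
          SimpleGraph.mem_neighborFinset]
      rw [hnf]
      exact hreg z
    rw [hNz, h3] at h2
    omega
  -- conclude
  have final : ∀ z₁ z₂ : V,
      (L.filter (fun D => z₁ ∈ D)).card = (L.filter (fun D => z₂ ∈ D)).card := by
    intro z₁ z₂
    have k1 := key z₁
    have k2 := key z₂
    have c1 := hcT z₁
    have c2 := hcT z₂
    have r1 := hrv z₁
    have r2 := hrv z₂
    have hrr : ((Finset.univ.erase z₂).filter (fun y => ¬ G.Adj z₂ y)).card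
        = ((Finset.univ.erase z₁).filter (fun y => ¬ G.Adj z₁ y)).card := by omega
    rw [hrr] at k2
    set n1 := (L.filter (fun D => z₁ ∈ D)).card
    set n2 := (L.filter (fun D => z₂ ∈ D)).card
    set b1 := (L.filter (fun D => z₁ ∉ D)).card
    set b2 := (L.filter (fun D => z₂ ∉ D)).card
    set R := ((Finset.univ.erase z₁).filter (fun y => ¬ G.Adj z₁ y)).card
    set T := L.card
    have k1' : ((s:ℤ)+1)*T = n1 + ((s:ℤ)*n1 + e*b1) + R*n1 := by exact_mod_cast k1
    have k2' : ((s:ℤ)+1)*T = n2 + ((s:ℤ)*n2 + e*b2) + R*n2 := by exact_mod_cast k2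
    have c1' : (n1:ℤ) + b1 = T := by exact_mod_cast c1
    have c2' : (n2:ℤ) + b2 = T := by exact_mod_cast c2
    have hz : ((n1:ℤ) - n2) * (1 + s + R - e) = 0 := by
      linear_combination (-1 : ℤ)*k1' + k2' - (e:ℤ)*c1' + (e:ℤ)*c2'
    have hpos : ((1:ℤ) + s + R - e) ≠ 0 := by
      have : (e:ℤ) ≤ s := by exact_mod_cast hes
      have hR : (0:ℤ) ≤ R := Int.natCast_nonneg R
      omega
    have := mul_eq_zero.mp hz
    rcases this with h | h
    · exact_mod_cast sub_eq_zero.mp h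
    · exact absurd h hpos
  refine ⟨(L.filter (fun D => x₀ ∈ D)).card, fun x => ?_⟩
  rw [← Finset.filter_filter, ← hL]
  exact final x x₀

end Stmt7Main
end

section
/- Let Γ be a Neumaier graph containing an e-regular clique of order s+1 (s, e positive integers), and suppose that every clique of Γ of order e+1 is contained in a clique of order s+1. Then Γ is a strongly regular graph. -/
open scoped Classical
open Matrix

variable {V : Type*}

section NeumaierAux
open Finset

private lemma common_card_aux [Fintype V] (G : SimpleGraph V) (x y : V) :
    Fintype.card (G.commonNeighbors x y) =
      (G.neighborFinset x ∩ G.neighborFinset y).card := by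
  rw [← Set.toFinset_card]
  congr 1
  ext u
  simp [SimpleGraph.mem_commonNeighbors]

private lemma clique_inter_nbr [Fintype V] {G : SimpleGraph V} {D : Finset V}
    (hD : G.IsClique ↑D) {u : V} (hu : u ∈ D) :
    G.neighborFinset u ∩ D = D.erase u := by
  ext w
  simp only [mem_inter, SimpleGraph.mem_neighborFinset, mem_erase]
  constructor
  · rintro ⟨ha, hw⟩
    exact ⟨fun h => G.irrefl (h ▸ ha), hw⟩
  · rintro ⟨hne, hw⟩
    exact ⟨hD (Finset.mem_coe.mpr hu) (Finset.mem_coe.mpr hw) (Ne.symm hne), hw⟩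

private lemma clique_inter_nbr2 [Fintype V] {G : SimpleGraph V} {D : Finset V}
    (hD : G.IsClique ↑D) {u w : V} (hu : u ∈ D) (hw : w ∈ D) :
    (G.neighborFinset u ∩ G.neighborFinset w) ∩ D = (D.erase u).erase w := by
  ext t
  simp only [mem_inter, SimpleGraph.mem_neighborFinset, mem_erase]
  constructor
  · rintro ⟨⟨ha, hb⟩, ht⟩
    exact ⟨fun h => G.irrefl (h ▸ hb), fun h => G.irrefl (h ▸ ha), ht⟩
  · rintro ⟨htw, htu, ht⟩
    exact ⟨⟨hD (Finset.mem_coe.mpr hu) (Finset.mem_coe.mpr ht) (Ne.symm htu),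
      hD (Finset.mem_coe.mpr hw) (Finset.mem_coe.mpr ht) (Ne.symm htw)⟩, ht⟩

section Reg
variable [Fintype V] {G : SimpleGraph V} {v k l s e : ℕ} {C : Finset V}

/-- outside a clique of size `s+1`, each vertex of the clique has `k - s` neighbours -/
private lemma deg_out (hER : IsEdgeRegular G v k l) {D : Finset V}
    (hD : G.IsNClique (s+1) D) {u : V} (hu : u ∈ D) :
    ((Dᶜ.filter (fun x => G.Adj x u)).card : ℤ) = (k : ℤ) - s := by
  have h1 : Dᶜ.filter (fun x => G.Adj x u) = G.neighborFinset u \ D := by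
    ext w
    simp only [mem_filter, mem_compl, mem_sdiff, SimpleGraph.mem_neighborFinset, mem_univ,
      true_and]
    rw [G.adj_comm]
    tauto
  have h2 : (G.neighborFinset u \ D).card + (G.neighborFinset u ∩ D).card = k := by
    rw [Finset.card_sdiff_add_card_inter, SimpleGraph.card_neighborFinset_eq_degree]
    exact hER.2.1 u
  have h3 : (G.neighborFinset u ∩ D).card = s := by
    rw [clique_inter_nbr hD.isClique hu]
    have := Finset.card_erase_add_one hu
    rw [hD.card_eq] at this
    omega
  rw [h1]
  have : (G.neighborFinset u \ D).card + s = k := by omega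
  push_cast [← this]
  ring

private lemma common_out (hER : IsEdgeRegular G v k l) (hs : 0 < s) {D : Finset V}
    (hD : G.IsNClique (s+1) D) {u w : V} (hu : u ∈ D) (hw : w ∈ D) (huw : u ≠ w) :
    ((Dᶜ.filter (fun x => G.Adj x u ∧ G.Adj x w)).card : ℤ) = (l : ℤ) - s + 1 := by
  have hadj : G.Adj u w := hD.isClique (Finset.mem_coe.mpr hu) (Finset.mem_coe.mpr hw) huw
  have h1 : Dᶜ.filter (fun x => G.Adj x u ∧ G.Adj x w)
      = (G.neighborFinset u ∩ G.neighborFinset w) \ D := by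
    ext t
    simp only [mem_filter, mem_compl, mem_sdiff, mem_inter, SimpleGraph.mem_neighborFinset,
      mem_univ, true_and]
    rw [G.adj_comm u t, G.adj_comm w t]
    tauto
  have h2 : ((G.neighborFinset u ∩ G.neighborFinset w) \ D).card
      + ((G.neighborFinset u ∩ G.neighborFinset w) ∩ D).card = l := by
    rw [Finset.card_sdiff_add_card_inter, ← common_card_aux]
    exact hER.2.2 u w hadj
  have h3 : ((G.neighborFinset u ∩ G.neighborFinset w) ∩ D).card + 2 = s + 1 := by
    rw [clique_inter_nbr2 hD.isClique hu hw]
    have e1 := Finset.card_erase_add_one hu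
    have e2 := Finset.card_erase_add_one (Finset.mem_erase.mpr ⟨Ne.symm huw, hw⟩)
    rw [hD.card_eq] at e1
    omega
  have h4 : ((G.neighborFinset u ∩ G.neighborFinset w) \ D).card + s = l + 1 := by omega
  rw [h1]
  have h4' : (((G.neighborFinset u ∩ G.neighborFinset w) \ D).card : ℤ) + s = l + 1 := by
    exact_mod_cast h4
  linarith

private lemma sum_sq_sub (t : Finset V) (a : V → ℤ) (b : ℤ) :
    ∑ y ∈ t, (a y - b)^2 = (∑ y ∈ t, (a y)^2) - 2*b*(∑ y ∈ t, a y) + t.card * b^2 := by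
  rw [Finset.mul_sum, ← Finset.sum_sub_distrib]
  have hc : (t.card : ℤ) * b^2 = ∑ _y ∈ t, b^2 := by
    rw [Finset.sum_const]; push_cast; ring
  rw [hc, ← Finset.sum_add_distrib]
  exact Finset.sum_congr rfl fun y _ => by ring

private lemma sumA (hER : IsEdgeRegular G v k l) {D : Finset V} (hD : G.IsNClique (s+1) D) :
    ∑ x ∈ Dᶜ, ((D.filter (fun u => G.Adj x u)).card : ℤ) = (s+1) * ((k : ℤ) - s) := by
  have expand : ∀ x : V, ((D.filter (fun u => G.Adj x u)).card : ℤ)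
      = ∑ u ∈ D, (if G.Adj x u then (1:ℤ) else 0) := by
    intro x
    rw [Finset.card_filter]
    push_cast
    exact Finset.sum_congr rfl (fun u _ => by split <;> simp)
  rw [Finset.sum_congr rfl (fun x _ => expand x), Finset.sum_comm]
  have inner : ∀ u ∈ D, ∑ x ∈ Dᶜ, (if G.Adj x u then (1:ℤ) else 0) = (k : ℤ) - s := by
    intro u hu
    rw [Finset.sum_boole]
    exact deg_out hER hD hu
  rw [Finset.sum_congr rfl inner, Finset.sum_const, hD.card_eq]
  push_cast
  ring

private lemma sumB (hER : IsEdgeRegular G v k l) (hs : 0 < s) {D : Finset V}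
    (hD : G.IsNClique (s+1) D) :
    ∑ x ∈ Dᶜ, ((D.filter (fun u => G.Adj x u)).card : ℤ)^2
      = (s+1) * ((k : ℤ) - s) + (s+1) * s * ((l : ℤ) - s + 1) := by
  have expand : ∀ x : V, ((D.filter (fun u => G.Adj x u)).card : ℤ)^2
      = ∑ u ∈ D, ∑ w ∈ D, (if G.Adj x u ∧ G.Adj x w then (1:ℤ) else 0) := by
    intro x
    have c1 : ((D.filter (fun u => G.Adj x u)).card : ℤ)
        = ∑ u ∈ D, (if G.Adj x u then (1:ℤ) else 0) := by
      rw [Finset.card_filter]; push_cast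
      exact Finset.sum_congr rfl (fun u _ => by split <;> simp)
    rw [sq, c1, Finset.sum_mul_sum]
    refine Finset.sum_congr rfl (fun u _ => Finset.sum_congr rfl (fun w _ => ?_))
    by_cases h1 : G.Adj x u <;> by_cases h2 : G.Adj x w <;> simp [h1, h2]
  rw [Finset.sum_congr rfl (fun x _ => expand x), Finset.sum_comm]
  have swap2 : ∀ u ∈ D, ∑ x ∈ Dᶜ, ∑ w ∈ D, (if G.Adj x u ∧ G.Adj x w then (1:ℤ) else 0)
      = ∑ w ∈ D, ∑ x ∈ Dᶜ, (if G.Adj x u ∧ G.Adj x w then (1:ℤ) else 0) :=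
    fun u _ => Finset.sum_comm
  rw [Finset.sum_congr rfl swap2]
  have inner : ∀ u ∈ D, ∑ w ∈ D, ∑ x ∈ Dᶜ, (if G.Adj x u ∧ G.Adj x w then (1:ℤ) else 0)
      = ((k : ℤ) - s) + s * ((l : ℤ) - s + 1) := by
    intro u hu
    have hval : ∀ w ∈ D, ∑ x ∈ Dᶜ, (if G.Adj x u ∧ G.Adj x w then (1:ℤ) else 0)
        = ((Dᶜ.filter (fun x => G.Adj x u ∧ G.Adj x w)).card : ℤ) := by
      intro w _
      rw [Finset.sum_boole]
    rw [Finset.sum_congr rfl hval, ← Finset.sum_erase_add D _ hu]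
    have t1 : ((Dᶜ.filter (fun x => G.Adj x u ∧ G.Adj x u)).card : ℤ) = (k : ℤ) - s := by
      have : Dᶜ.filter (fun x => G.Adj x u ∧ G.Adj x u) = Dᶜ.filter (fun x => G.Adj x u) := by
        ext t; simp [and_self]
      rw [this]
      exact deg_out hER hD hu
    have t2 : ∀ w ∈ D.erase u,
        ((Dᶜ.filter (fun x => G.Adj x u ∧ G.Adj x w)).card : ℤ) = (l : ℤ) - s + 1 := by
      intro w hwe
      obtain ⟨hne, hw⟩ := Finset.mem_erase.mp hwe
      exact common_out hER hs hD hu hw (Ne.symm hne)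
    rw [Finset.sum_congr rfl t2, t1, Finset.sum_const]
    have : (D.erase u).card = s := by
      have := Finset.card_erase_add_one hu
      rw [hD.card_eq] at this; omega
    rw [this]
    push_cast
    ring
  rw [Finset.sum_congr rfl inner, Finset.sum_const, hD.card_eq]
  push_cast
  ring

/-- every `(s+1)`-clique in the graph is `e`-regular -/
private lemma line_ereg (hER : IsEdgeRegular G v k l) (hs : 0 < s)
    (hC : IsRegularCliqueWith G C e) (hCcard : C.card = s + 1) :
    ∀ ⦃D : Finset V⦄, G.IsNClique (s+1) D → ∀ ⦃x : V⦄, x ∉ D →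
      (D.filter (fun u => G.Adj x u)).card = e := by
  have hCline : G.IsNClique (s+1) C := ⟨hC.1, hCcard⟩
  intro D hD x hx
  have compl_eq : (Dᶜ.card : ℤ) = (Cᶜ.card : ℤ) := by
    rw [Finset.card_compl, Finset.card_compl, hD.card_eq, hCline.card_eq]
  have hCsumA : ∑ y ∈ Cᶜ, ((C.filter (fun u => G.Adj y u)).card : ℤ) = (Cᶜ.card : ℤ) * e := by
    rw [Finset.sum_congr rfl (fun y hy => by
      rw [hC.2.2 y (Finset.mem_compl.mp hy)]), Finset.sum_const]
    push_cast; ring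
  have hCsumB : ∑ y ∈ Cᶜ, ((C.filter (fun u => G.Adj y u)).card : ℤ)^2
      = (Cᶜ.card : ℤ) * e^2 := by
    rw [Finset.sum_congr rfl (fun y hy => by
      rw [hC.2.2 y (Finset.mem_compl.mp hy)]), Finset.sum_const]
    push_cast; ring
  have hA : ((s : ℤ)+1) * ((k : ℤ) - s) = (Cᶜ.card : ℤ) * e := by
    rw [← hCsumA]
    exact (sumA hER hCline).symm
  have hB : ((s : ℤ)+1) * ((k : ℤ) - s) + ((s : ℤ)+1) * s * ((l : ℤ) - s + 1)
      = (Cᶜ.card : ℤ) * e^2 := by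
    rw [← hCsumB]
    exact (sumB hER hs hCline).symm
  have key : ∑ y ∈ Dᶜ, (((D.filter (fun u => G.Adj y u)).card : ℤ) - e)^2 = 0 := by
    rw [sum_sq_sub, sumA hER hD, sumB hER hs hD, compl_eq]
    push_cast
    rw [hB, hA]
    ring
  have each := (Finset.sum_eq_zero_iff_of_nonneg
    (fun y _ => sq_nonneg _)).mp key x (Finset.mem_compl.mpr hx)
  have : ((D.filter (fun u => G.Adj x u)).card : ℤ) = e := by
    have := sq_eq_zero_iff.mp each
    linarith
  exact_mod_cast this

end Reg

section Geo
variable [Fintype V] {G : SimpleGraph V} {s e : ℕ}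

/-- two distinct `(s+1)`-cliques meet in at most `e` points -/
private lemma line_inter_le
    (ereg : ∀ ⦃D : Finset V⦄, G.IsNClique (s+1) D → ∀ ⦃x : V⦄, x ∉ D →
      (D.filter (fun u => G.Adj x u)).card = e)
    {D L : Finset V} (hD : G.IsNClique (s+1) D) (hL : G.IsNClique (s+1) L) (hne : D ≠ L) :
    (D ∩ L).card ≤ e := by
  have hex : ∃ u ∈ D, u ∉ L := by
    by_contra h
    push_neg at h
    exact hne (Finset.eq_of_subset_of_card_le h (by rw [hD.card_eq, hL.card_eq]))
  obtain ⟨u, huD, huL⟩ := hex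
  have hsub : D ∩ L ⊆ L.filter (fun w => G.Adj u w) := by
    intro w hw
    obtain ⟨hwD, hwL⟩ := Finset.mem_inter.mp hw
    refine Finset.mem_filter.mpr ⟨hwL, ?_⟩
    exact hD.isClique (Finset.mem_coe.mpr huD) (Finset.mem_coe.mpr hwD)
      (fun h => huL (h ▸ hwL))
  calc (D ∩ L).card ≤ (L.filter (fun w => G.Adj u w)).card := Finset.card_le_card hsub
    _ = e := ereg hL huL

/-- an `(e+1)`-clique is contained in at most one `(s+1)`-clique -/
private lemma line_unique_s8
    (ereg : ∀ ⦃D : Finset V⦄, G.IsNClique (s+1) D → ∀ ⦃x : V⦄, x ∉ D →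
      (D.filter (fun u => G.Adj x u)).card = e)
    {K D L : Finset V} (hK : K.card = e + 1)
    (hD : G.IsNClique (s+1) D) (hL : G.IsNClique (s+1) L)
    (hKD : K ⊆ D) (hKL : K ⊆ L) : D = L := by
  by_contra hne
  have h1 : K ⊆ D ∩ L := Finset.subset_inter hKD hKL
  have h2 := Finset.card_le_card h1
  have h3 := line_inter_le ereg hD hL hne
  omega

/-- the trace of an outside vertex on a line, together with the vertex, is an
`(e+1)`-clique -/
private lemma trace_clique
    (ereg : ∀ ⦃D : Finset V⦄, G.IsNClique (s+1) D → ∀ ⦃x : V⦄, x ∉ D →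
      (D.filter (fun u => G.Adj x u)).card = e)
    {D : Finset V} (hD : G.IsNClique (s+1) D) {z : V} (hz : z ∉ D) :
    G.IsNClique (e+1) (insert z (D.filter (fun u => G.Adj z u))) := by
  constructor
  · intro a ha b hb hab
    simp only [Finset.coe_insert, Set.mem_insert_iff, Finset.mem_coe, Finset.mem_filter] at ha hb
    rcases ha with ha | ⟨haD, haz⟩
    · rcases hb with hb | ⟨hbD, hbz⟩
      · exact absurd (ha.trans hb.symm) hab
      · exact ha ▸ hbz
    · rcases hb with hb | ⟨hbD, hbz⟩
      · exact hb ▸ haz.symm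
      · exact hD.isClique (Finset.mem_coe.mpr haD) (Finset.mem_coe.mpr hbD) hab
  · rw [Finset.card_insert_of_notMem (fun h => hz (Finset.mem_filter.mp h).1)]
    rw [ereg hD hz]

/-- key double count: lines meeting a given line `L` in exactly `e` points, through two
given points `x z` of `L`, counted with weight `s+1-e`, are as many as the common
neighbours of `x` and `z` outside `L`. -/
private lemma line_count
    (ereg : ∀ ⦃D : Finset V⦄, G.IsNClique (s+1) D → ∀ ⦃x : V⦄, x ∉ D →
      (D.filter (fun u => G.Adj x u)).card = e)
    (hext : ∀ H : Finset V, G.IsNClique (e + 1) H →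
      ∃ D : Finset V, G.IsNClique (s + 1) D ∧ H ⊆ D)
    {L : Finset V} (hL : G.IsNClique (s+1) L) {x z : V} (hx : x ∈ L) (hz : z ∈ L) :
    ((Finset.univ.filter (fun D : Finset V =>
        G.IsNClique (s+1) D ∧ D ≠ L ∧ x ∈ D ∧ z ∈ D ∧ (D ∩ L).card = e)).card) * (s + 1 - e)
      = (Finset.univ.filter (fun u => u ∉ L ∧ G.Adj x u ∧ G.Adj z u)).card := by
  set B := Finset.univ.filter (fun D : Finset V =>
    G.IsNClique (s+1) D ∧ D ≠ L ∧ x ∈ D ∧ z ∈ D ∧ (D ∩ L).card = e) with hB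
  -- the trace of a vertex outside `L` determines the line
  have step : ∀ D ∈ B, ∀ u ∈ D \ L, D ∩ L = L.filter (fun w => G.Adj u w) := by
    intro D hD u hu
    obtain ⟨hDcl, hDne, -, -, hDe⟩ := (Finset.mem_filter.mp hD).2
    obtain ⟨huD, huL⟩ := Finset.mem_sdiff.mp hu
    have hsub : D ∩ L ⊆ L.filter (fun w => G.Adj u w) := by
      intro w hw
      obtain ⟨hwD, hwL⟩ := Finset.mem_inter.mp hw
      exact Finset.mem_filter.mpr ⟨hwL,
        hDcl.isClique (Finset.mem_coe.mpr huD) (Finset.mem_coe.mpr hwD)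
          (fun h => huL (h ▸ hwL))⟩
    refine Finset.eq_of_subset_of_card_le hsub ?_
    rw [ereg hL huL, hDe]
  have same : ∀ D1 ∈ B, ∀ D2 ∈ B, ∀ u, u ∈ D1 \ L → u ∈ D2 \ L → D1 = D2 := by
    intro D1 h1 D2 h2 u hu1 hu2
    obtain ⟨hD1cl, -, -, -, hD1e⟩ := (Finset.mem_filter.mp h1).2
    obtain ⟨hD2cl, -, -, -, -⟩ := (Finset.mem_filter.mp h2).2
    have e1 := step D1 h1 u hu1
    have e2 := step D2 h2 u hu2
    have huD1 := (Finset.mem_sdiff.mp hu1).1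
    have huD2 := (Finset.mem_sdiff.mp hu2).1
    have huL := (Finset.mem_sdiff.mp hu1).2
    set K := insert u (D1 ∩ L) with hK
    have hKcard : K.card = e + 1 := by
      rw [hK, Finset.card_insert_of_notMem
        (fun h => huL (Finset.mem_inter.mp h).2), hD1e]
    have hKD1 : K ⊆ D1 := by
      rw [hK]
      exact Finset.insert_subset huD1 (Finset.inter_subset_left)
    have hKD2 : K ⊆ D2 := by
      rw [hK, e1, ← e2]
      exact Finset.insert_subset huD2 (Finset.inter_subset_left)
    exact line_unique_s8 ereg hKcard hD1cl hD2cl hKD1 hKD2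
  have hdisj : ∀ D1 ∈ B, ∀ D2 ∈ B, D1 ≠ D2 → Disjoint (D1 \ L) (D2 \ L) := by
    intro D1 h1 D2 h2 hne
    rw [Finset.disjoint_left]
    intro u hu1 hu2
    exact hne (same D1 h1 D2 h2 u hu1 hu2)
  have hcover : B.biUnion (fun D => D \ L)
      = Finset.univ.filter (fun u => u ∉ L ∧ G.Adj x u ∧ G.Adj z u) := by
    ext u
    simp only [Finset.mem_biUnion, Finset.mem_filter, Finset.mem_univ, true_and]
    constructor
    · rintro ⟨D, hD, hu⟩
      obtain ⟨hDcl, -, hxD, hzD, -⟩ := (Finset.mem_filter.mp hD).2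
      obtain ⟨huD, huL⟩ := Finset.mem_sdiff.mp hu
      refine ⟨huL, ?_, ?_⟩
      · exact hDcl.isClique (Finset.mem_coe.mpr hxD) (Finset.mem_coe.mpr huD)
          (fun h => huL (h ▸ hx))
      · exact hDcl.isClique (Finset.mem_coe.mpr hzD) (Finset.mem_coe.mpr huD)
          (fun h => huL (h ▸ hz))
    · rintro ⟨huL, hxu, hzu⟩
      have hKcl := trace_clique ereg hL huL
      obtain ⟨D, hDcl, hKD⟩ := hext _ hKcl
      have huD : u ∈ D := hKD (Finset.mem_insert_self _ _)
      have htr : L.filter (fun w => G.Adj u w) ⊆ D ∩ L := by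
        intro w hw
        exact Finset.mem_inter.mpr
          ⟨hKD (Finset.mem_insert_of_mem hw), (Finset.mem_filter.mp hw).1⟩
      have hDne : D ≠ L := fun h => huL (h ▸ huD)
      have hDe : (D ∩ L).card = e := by
        have hle := line_inter_le ereg hDcl hL hDne
        have hge := Finset.card_le_card htr
        rw [ereg hL huL] at hge
        omega
      refine ⟨D, ?_, Finset.mem_sdiff.mpr ⟨huD, huL⟩⟩
      refine Finset.mem_filter.mpr ⟨Finset.mem_univ _, hDcl, hDne, ?_, ?_, hDe⟩
      · exact (Finset.mem_inter.mp (htr (Finset.mem_filter.mpr ⟨hx, hxu.symm⟩))).1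
      · exact (Finset.mem_inter.mp (htr (Finset.mem_filter.mpr ⟨hz, hzu.symm⟩))).1
  have hcard : ∀ D ∈ B, (D \ L).card = s + 1 - e := by
    intro D hD
    obtain ⟨hDcl, -, -, -, hDe⟩ := (Finset.mem_filter.mp hD).2
    have h := Finset.card_sdiff_add_card_inter D L
    rw [hDe, hDcl.card_eq] at h
    omega
  calc B.card * (s + 1 - e) = ∑ _D ∈ B, (s + 1 - e) := by
        rw [Finset.sum_const, smul_eq_mul]
    _ = ∑ D ∈ B, (D \ L).card := Finset.sum_congr rfl (fun D hD => (hcard D hD).symm)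
    _ = (B.biUnion (fun D => D \ L)).card := (Finset.card_biUnion hdisj).symm
    _ = _ := by rw [hcover]

end Geo

section Geo2
variable [Fintype V] {G : SimpleGraph V} {k l s e : ℕ}

private lemma cnt1 (hreg : G.IsRegularOfDegree k) {L : Finset V} (hL : G.IsNClique (s+1) L)
    {x : V} (hx : x ∈ L) :
    (Finset.univ.filter (fun u => u ∉ L ∧ G.Adj x u ∧ G.Adj x u)).card + s = k := by
  have h1 : Finset.univ.filter (fun u => u ∉ L ∧ G.Adj x u ∧ G.Adj x u)
      = G.neighborFinset x \ L := by
    ext u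
    simp only [Finset.mem_filter, Finset.mem_univ, true_and, Finset.mem_sdiff,
      SimpleGraph.mem_neighborFinset]
    tauto
  rw [h1]
  have h2 := Finset.card_sdiff_add_card_inter (G.neighborFinset x) L
  rw [clique_inter_nbr hL.isClique hx, SimpleGraph.card_neighborFinset_eq_degree, hreg x] at h2
  have h3 := Finset.card_erase_add_one hx
  rw [hL.card_eq] at h3
  omega

private lemma cnt2 (hl : ∀ x y : V, G.Adj x y → Fintype.card (G.commonNeighbors x y) = l)
    {L : Finset V} (hL : G.IsNClique (s+1) L) {x z : V} (hx : x ∈ L) (hz : z ∈ L)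
    (hxz : G.Adj x z) :
    (Finset.univ.filter (fun u => u ∉ L ∧ G.Adj x u ∧ G.Adj z u)).card + s = l + 1 := by
  have h1 : Finset.univ.filter (fun u => u ∉ L ∧ G.Adj x u ∧ G.Adj z u)
      = (G.neighborFinset x ∩ G.neighborFinset z) \ L := by
    ext u
    simp only [Finset.mem_filter, Finset.mem_univ, true_and, Finset.mem_sdiff, Finset.mem_inter,
      SimpleGraph.mem_neighborFinset]
    tauto
  rw [h1]
  have h2 := Finset.card_sdiff_add_card_inter (G.neighborFinset x ∩ G.neighborFinset z) L
  rw [clique_inter_nbr2 hL.isClique hx hz, ← common_card_aux, hl x z hxz] at h2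
  have h3 := Finset.card_erase_add_one hx
  have h4 := Finset.card_erase_add_one (Finset.mem_erase.mpr ⟨fun h => G.irrefl (h ▸ hxz), hz⟩)
  rw [hL.card_eq] at h3
  omega

/-- the fibration identity: `n_x * (s+1-e) = m_{xz} * (k-l-1+(s+1-e))` for adjacent `x z`. -/
private lemma fib (hreg : G.IsRegularOfDegree k)
    (hl : ∀ x y : V, G.Adj x y → Fintype.card (G.commonNeighbors x y) = l)
    (hes : e ≤ s)
    (ereg : ∀ ⦃D : Finset V⦄, G.IsNClique (s+1) D → ∀ ⦃x : V⦄, x ∉ D →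
      (D.filter (fun u => G.Adj x u)).card = e)
    (hext : ∀ H : Finset V, G.IsNClique (e + 1) H →
      ∃ D : Finset V, G.IsNClique (s + 1) D ∧ H ⊆ D)
    {x z : V} (hxz : G.Adj x z) :
    ((Finset.univ.filter (fun D : Finset V => G.IsNClique (s+1) D ∧ x ∈ D)).card : ℤ)
        * ((s : ℤ) + 1 - e)
      = ((Finset.univ.filter (fun D : Finset V =>
          G.IsNClique (s+1) D ∧ x ∈ D ∧ z ∈ D)).card : ℤ)
        * ((k : ℤ) - l - 1 + ((s : ℤ) + 1 - e)) := by
  classical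
  choose F hF1 hF2 using hext
  set T := Finset.univ.filter (fun D : Finset V => G.IsNClique (s+1) D ∧ x ∈ D) with hT
  set T2 := Finset.univ.filter
    (fun D : Finset V => G.IsNClique (s+1) D ∧ x ∈ D ∧ z ∈ D) with hT2
  set φ : Finset V → Finset V := fun D =>
    if h : G.IsNClique (s+1) D ∧ z ∉ D then F _ (trace_clique ereg h.1 h.2) else D with hφ
  have hmaps : ∀ D ∈ T, φ D ∈ T2 := by
    intro D hD
    obtain ⟨hDcl, hxD⟩ := (Finset.mem_filter.mp hD).2
    by_cases hzD : z ∈ D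
    · have : φ D = D := by simp only [hφ]; exact dif_neg (by tauto)
      rw [this]
      exact Finset.mem_filter.mpr ⟨Finset.mem_univ _, hDcl, hxD, hzD⟩
    · have : φ D = F _ (trace_clique ereg hDcl hzD) := by simp only [hφ]; exact dif_pos ⟨hDcl, hzD⟩
      rw [this]
      refine Finset.mem_filter.mpr ⟨Finset.mem_univ _, hF1 _ _, ?_, ?_⟩
      · exact hF2 _ _ (Finset.mem_insert_of_mem (Finset.mem_filter.mpr ⟨hxD, hxz.symm⟩))
      · exact hF2 _ _ (Finset.mem_insert_self _ _)
  have hfib : ∀ L ∈ T2, T.filter (fun D => φ D = L)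
      = insert L (Finset.univ.filter (fun D : Finset V =>
          G.IsNClique (s+1) D ∧ x ∈ D ∧ z ∉ D ∧ (D ∩ L).card = e)) := by
    intro L hL
    obtain ⟨hLcl, hxL, hzL⟩ := (Finset.mem_filter.mp hL).2
    ext D
    simp only [hT, Finset.mem_filter, Finset.mem_univ, true_and, Finset.mem_insert]
    constructor
    · rintro ⟨⟨hDcl, hxD⟩, hphi⟩
      by_cases hzD : z ∈ D
      · left
        have : φ D = D := by simp only [hφ]; exact dif_neg (by tauto)
        rw [this] at hphi
        exact hphi
      · right
        have heq : φ D = F _ (trace_clique ereg hDcl hzD) := by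
          simp only [hφ]; exact dif_pos ⟨hDcl, hzD⟩
        rw [heq] at hphi
        refine ⟨hDcl, hxD, hzD, ?_⟩
        have hKL : D.filter (fun u => G.Adj z u) ⊆ D ∩ L := by
          intro w hw
          refine Finset.mem_inter.mpr ⟨(Finset.mem_filter.mp hw).1, ?_⟩
          have hwF : w ∈ F _ (trace_clique ereg hDcl hzD) :=
            hF2 _ _ (Finset.mem_insert_of_mem hw)
          rwa [hphi] at hwF
        have hge := Finset.card_le_card hKL
        rw [ereg hDcl hzD] at hge
        have hDne : D ≠ L := fun h => hzD (h ▸ hzL)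
        have hle := line_inter_le ereg hDcl hLcl hDne
        omega
    · rintro (rfl | ⟨hDcl, hxD, hzD, hDe⟩)
      · refine ⟨⟨hLcl, hxL⟩, ?_⟩
        simp only [hφ]; exact dif_neg (by tauto)
      · refine ⟨⟨hDcl, hxD⟩, ?_⟩
        have heq : φ D = F _ (trace_clique ereg hDcl hzD) := by
          simp only [hφ]; exact dif_pos ⟨hDcl, hzD⟩
        rw [heq]
        have hDL : D ∩ L ⊆ D.filter (fun u => G.Adj z u) := by
          intro w hw
          obtain ⟨hwD, hwL⟩ := Finset.mem_inter.mp hw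
          exact Finset.mem_filter.mpr ⟨hwD,
            hLcl.isClique (Finset.mem_coe.mpr hzL) (Finset.mem_coe.mpr hwL)
              (fun h => hzD (h ▸ hwD))⟩
        have hfeq : D.filter (fun u => G.Adj z u) = D ∩ L := by
          refine (Finset.eq_of_subset_of_card_le hDL ?_).symm
          rw [ereg hDcl hzD, hDe]
        have hKL : insert z (D.filter (fun u => G.Adj z u)) ⊆ L := by
          rw [hfeq]
          exact Finset.insert_subset hzL Finset.inter_subset_right
        exact line_unique_s8 ereg (trace_clique ereg hDcl hzD).card_eq
          (hF1 _ _) hLcl (hF2 _ _) hKL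
  have hcount := Finset.card_eq_sum_card_fiberwise hmaps
  have hfibcard : ∀ L ∈ T2, (T.filter (fun D => φ D = L)).card
      = (Finset.univ.filter (fun D : Finset V =>
          G.IsNClique (s+1) D ∧ x ∈ D ∧ z ∉ D ∧ (D ∩ L).card = e)).card + 1 := by
    intro L hL
    have hzL := (Finset.mem_filter.mp hL).2.2.2
    rw [hfib L hL, Finset.card_insert_of_notMem
      (fun h => ((Finset.mem_filter.mp h).2.2.2.1 hzL))]
  have hSL : ∀ L ∈ T2, ((Finset.univ.filter (fun D : Finset V =>
        G.IsNClique (s+1) D ∧ x ∈ D ∧ z ∉ D ∧ (D ∩ L).card = e)).card : ℤ)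
        * ((s : ℤ) + 1 - e) = (k : ℤ) - l - 1 := by
    intro L hL
    obtain ⟨hLcl, hxL, hzL⟩ := (Finset.mem_filter.mp hL).2
    set Bb := Finset.univ.filter (fun D : Finset V =>
      G.IsNClique (s+1) D ∧ D ≠ L ∧ x ∈ D ∧ x ∈ D ∧ (D ∩ L).card = e) with hBb
    set B2 := Finset.univ.filter (fun D : Finset V =>
      G.IsNClique (s+1) D ∧ D ≠ L ∧ x ∈ D ∧ z ∈ D ∧ (D ∩ L).card = e) with hB2
    set SS := Finset.univ.filter (fun D : Finset V =>
      G.IsNClique (s+1) D ∧ x ∈ D ∧ z ∉ D ∧ (D ∩ L).card = e) with hSS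
    have hsplit : SS.card + B2.card = Bb.card := by
      have h1 : Bb.filter (fun D => z ∉ D) = SS := by
        ext D
        simp only [hBb, hSS, Finset.mem_filter, Finset.mem_univ, true_and]
        constructor
        · rintro ⟨⟨hcl, hne, hxD, -, hDe⟩, hzD⟩
          exact ⟨hcl, hxD, hzD, hDe⟩
        · rintro ⟨hcl, hxD, hzD, hDe⟩
          exact ⟨⟨hcl, fun h => hzD (h ▸ hzL), hxD, hxD, hDe⟩, hzD⟩
      have h2 : Bb.filter (fun D => ¬ z ∉ D) = B2 := by
        ext D
        simp only [hBb, hB2, Finset.mem_filter, Finset.mem_univ, true_and, not_not]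
        constructor
        · rintro ⟨⟨hcl, hne, hxD, -, hDe⟩, hzD⟩
          exact ⟨hcl, hne, hxD, hzD, hDe⟩
        · rintro ⟨hcl, hne, hxD, hzD, hDe⟩
          exact ⟨⟨hcl, hne, hxD, hxD, hDe⟩, hzD⟩
      rw [← h1, ← h2]
      exact Finset.card_filter_add_card_filter_not _
    have hb := line_count ereg (fun H hH => ⟨F H hH, hF1 H hH, hF2 H hH⟩) hLcl hxL hxL
    have hb2 := line_count ereg (fun H hH => ⟨F H hH, hF1 H hH, hF2 H hH⟩) hLcl hxL hzL
    have hc1 := cnt1 hreg hLcl hxL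
    have hc2 := cnt2 hl hLcl hxL hzL (by
      exact hLcl.isClique (Finset.mem_coe.mpr hxL) (Finset.mem_coe.mpr hzL)
        (fun h => G.irrefl (h ▸ hxz)))
    have hes1 : e ≤ s + 1 := by omega
    have hmul : SS.card * (s + 1 - e) + B2.card * (s + 1 - e) = Bb.card * (s + 1 - e) := by
      rw [← add_mul, hsplit]
    rw [← hBb] at hb
    rw [← hB2] at hb2
    zify [hes1] at hb hb2 hc1 hc2 hmul
    linarith
  rw [hcount]
  push_cast
  rw [Finset.sum_mul]
  have hterm : ∀ L ∈ T2, ((T.filter (fun D => φ D = L)).card : ℤ) * ((s : ℤ) + 1 - e)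
      = (k : ℤ) - l - 1 + ((s : ℤ) + 1 - e) := by
    intro L hL
    rw [hfibcard L hL]
    push_cast
    rw [add_mul, hSL L hL]
    ring
  rw [Finset.sum_congr rfl hterm, Finset.sum_const, nsmul_eq_mul]

private lemma swap_count (T : Finset (Finset V)) (p : V → Prop) :
    ∑ D ∈ T, (D.filter p).card
      = ∑ u ∈ Finset.univ.filter p, (T.filter (fun D => u ∈ D)).card := by
  classical
  have lhs : ∀ D : Finset V, (D.filter p).card
      = ∑ u ∈ Finset.univ, if u ∈ D ∧ p u then 1 else 0 := by
    intro D
    rw [← Finset.card_filter]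
    congr 1
    ext u
    simp only [Finset.mem_filter, Finset.mem_univ, true_and]
  rw [Finset.sum_congr rfl (fun D _ => lhs D), Finset.sum_comm]
  have rhs : ∀ u : V, (∑ D ∈ T, if u ∈ D ∧ p u then 1 else 0)
      = if p u then (T.filter (fun D => u ∈ D)).card else 0 := by
    intro u
    by_cases hp : p u
    · simp only [hp, and_true, if_true]
      exact (Finset.card_filter _ _).symm
    · simp [hp]
  rw [Finset.sum_congr rfl (fun u _ => rhs u), ← Finset.sum_filter]

end Geo2

end NeumaierAux

/-- A Neumaier graph with an `e`-regular clique of order `s + 1` in which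
every clique of order `e + 1` is contained in a clique of order `s + 1` is strongly regular. -/
theorem stmt8 [Fintype V] (G : SimpleGraph V) (v k l s e : ℕ)
    (hER : IsEdgeRegular G v k l) (hnc : G ≠ ⊤) (hs : 0 < s) (he : 0 < e)
    (C : Finset V) (hC : IsRegularCliqueWith G C e) (hCcard : C.card = s + 1)
    (hext : ∀ H : Finset V, G.IsNClique (e + 1) H → ∃ D : Finset V, G.IsNClique (s + 1) D ∧ H ⊆ D) :
    ∃ n k' l' m : ℕ, G.IsSRGWith n k' l' m := by
  classical
  have hCline : G.IsNClique (s+1) C := ⟨hC.1, hCcard⟩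
  have ereg := line_ereg hER hs hC hCcard
  -- a nonadjacent pair exists
  have hpair : ∃ a b : V, a ≠ b ∧ ¬ G.Adj a b := by
    by_contra h
    push_neg at h
    apply hnc
    ext a b
    simp only [SimpleGraph.top_adj]
    exact ⟨fun h' => h'.ne, fun hne => h a b hne⟩
  -- e ≤ s
  have hes : e ≤ s := by
    obtain ⟨a, b, hab, hnadj⟩ := hpair
    have hout : ∃ x, x ∉ C := by
      by_cases haC : a ∈ C
      · exact ⟨b, fun hb => hnadj (hC.1 (Finset.mem_coe.mpr haC) (Finset.mem_coe.mpr hb) hab)⟩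
      · exact ⟨a, haC⟩
    obtain ⟨x0, hx0⟩ := hout
    have hxe := hC.2.2 x0 hx0
    by_contra hgt
    push_neg at hgt
    have hle : e ≤ s + 1 := by
      rw [← hxe, ← hCcard]
      exact Finset.card_filter_le _ _
    have heq : e = s + 1 := by omega
    have hfull : C.filter (fun y => G.Adj x0 y) = C := by
      apply Finset.eq_of_subset_of_card_le (Finset.filter_subset _ _)
      rw [hxe, heq, hCcard]
    have hK : G.IsNClique (e+1) (insert x0 C) := by
      constructor
      · intro p hp q hq hpq
        simp only [Finset.coe_insert, Set.mem_insert_iff, Finset.mem_coe] at hp hq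
        rcases hp with rfl | hp
        · rcases hq with rfl | hq
          · exact absurd rfl hpq
          · have hq' : q ∈ C.filter (fun y => G.Adj p y) := by rw [hfull]; exact hq
            exact (Finset.mem_filter.mp hq').2
        · rcases hq with rfl | hq
          · have hp' : p ∈ C.filter (fun y => G.Adj q y) := by rw [hfull]; exact hp
            exact ((Finset.mem_filter.mp hp').2).symm
          · exact hC.1 (Finset.mem_coe.mpr hp) (Finset.mem_coe.mpr hq) hpq
      · rw [Finset.card_insert_of_notMem hx0, hCcard, heq]
    obtain ⟨D, hD, hKD⟩ := hext _ hK
    have hcard := Finset.card_le_card hKD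
    rw [hD.card_eq, Finset.card_insert_of_notMem hx0, hCcard] at hcard
    omega
  -- every vertex is in a line
  have vtx : ∀ x : V, ∃ D : Finset V, G.IsNClique (s+1) D ∧ x ∈ D := by
    intro x
    by_cases hxC : x ∈ C
    · exact ⟨C, hCline, hxC⟩
    · obtain ⟨D, hD, hKD⟩ := hext _ (trace_clique ereg hCline hxC)
      exact ⟨D, hD, hKD (Finset.mem_insert_self _ _)⟩
  -- the key identity for every nonadjacent pair
  have key : ∀ x y : V, x ≠ y → ¬ G.Adj x y →
      ((G.neighborFinset x ∩ G.neighborFinset y).card : ℤ) * ((s : ℤ) + 1 - e)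
        = (e : ℤ) * ((k : ℤ) - l - 1 + ((s : ℤ) + 1 - e)) := by
    intro x y hxy hnadj
    set T := Finset.univ.filter (fun D : Finset V => G.IsNClique (s+1) D ∧ x ∈ D) with hT
    have hTpos : 0 < T.card := by
      obtain ⟨D, h1, h2⟩ := vtx x
      exact Finset.card_pos.mpr ⟨D, Finset.mem_filter.mpr ⟨Finset.mem_univ _, h1, h2⟩⟩
    have hA : ∑ D ∈ T, (D.filter (fun u => G.Adj y u)).card = T.card * e := by
      have hval : ∀ D ∈ T, (D.filter (fun u => G.Adj y u)).card = e := by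
        intro D hD
        obtain ⟨hDcl, hxD⟩ := (Finset.mem_filter.mp hD).2
        have hyD : y ∉ D := fun hyD =>
          hnadj (hDcl.isClique (Finset.mem_coe.mpr hxD) (Finset.mem_coe.mpr hyD) hxy)
        exact ereg hDcl hyD
      rw [Finset.sum_congr rfl hval, Finset.sum_const, smul_eq_mul]
    have hswap := swap_count T (fun u => G.Adj y u)
    set W := G.neighborFinset x ∩ G.neighborFinset y with hW
    have hWsub : W ⊆ Finset.univ.filter (fun u => G.Adj y u) := by
      intro u hu
      simp only [hW, Finset.mem_inter, SimpleGraph.mem_neighborFinset] at hu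
      exact Finset.mem_filter.mpr ⟨Finset.mem_univ _, hu.2⟩
    have hvanish : ∀ u ∈ Finset.univ.filter (fun u => G.Adj y u), u ∉ W →
        (T.filter (fun D => u ∈ D)).card = 0 := by
      intro u hu hnu
      rw [Finset.card_eq_zero, Finset.filter_eq_empty_iff]
      intro D hD huD
      obtain ⟨hDcl, hxD⟩ := (Finset.mem_filter.mp hD).2
      have hyu : G.Adj y u := (Finset.mem_filter.mp hu).2
      have hux : u ≠ x := fun h => hnadj (by rw [h] at hyu; exact hyu.symm)
      have hadj : G.Adj x u :=
        hDcl.isClique (Finset.mem_coe.mpr hxD) (Finset.mem_coe.mpr huD) (Ne.symm hux)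
      apply hnu
      simp only [hW, Finset.mem_inter, SimpleGraph.mem_neighborFinset]
      exact ⟨hadj, hyu⟩
    have hrestrict : ∑ u ∈ Finset.univ.filter (fun u => G.Adj y u),
        (T.filter (fun D => u ∈ D)).card = ∑ u ∈ W, (T.filter (fun D => u ∈ D)).card :=
      (Finset.sum_subset hWsub hvanish).symm
    have h1 : ((T.card * e : ℕ) : ℤ) = ∑ u ∈ W, ((T.filter (fun D => u ∈ D)).card : ℤ) := by
      rw [← hA, hswap, hrestrict]
      push_cast
      rfl
    have main : (T.card : ℤ) * ((e : ℤ) * ((k : ℤ) - l - 1 + ((s : ℤ) + 1 - e)))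
        = (T.card : ℤ) * (((W.card : ℤ)) * ((s : ℤ) + 1 - e)) := by
      calc (T.card : ℤ) * ((e : ℤ) * ((k : ℤ) - l - 1 + ((s : ℤ) + 1 - e)))
          = (∑ u ∈ W, ((T.filter (fun D => u ∈ D)).card : ℤ))
            * ((k : ℤ) - l - 1 + ((s : ℤ) + 1 - e)) := by
            rw [← h1]; push_cast; ring
        _ = ∑ u ∈ W, ((T.filter (fun D => u ∈ D)).card : ℤ)
            * ((k : ℤ) - l - 1 + ((s : ℤ) + 1 - e)) := Finset.sum_mul _ _ _
        _ = ∑ u ∈ W, (T.card : ℤ) * ((s : ℤ) + 1 - e) := by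
            refine Finset.sum_congr rfl (fun u hu => ?_)
            have hxu : G.Adj x u := by
              simp only [hW, Finset.mem_inter, SimpleGraph.mem_neighborFinset] at hu
              exact hu.1
            have hfib := fib hER.2.1 hER.2.2 hes ereg hext hxu
            have hTT : T.filter (fun D => u ∈ D) = Finset.univ.filter
                (fun D : Finset V => G.IsNClique (s+1) D ∧ x ∈ D ∧ u ∈ D) := by
              ext D
              simp only [hT, Finset.filter_filter, Finset.mem_filter, Finset.mem_univ, true_and,
                and_assoc]
            rw [hTT, ← hT] at *
            exact hfib.symm
        _ = (T.card : ℤ) * ((W.card : ℤ) * ((s : ℤ) + 1 - e)) := by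
            rw [Finset.sum_const, nsmul_eq_mul]
            ring
    have hTz : (T.card : ℤ) ≠ 0 := by
      exact_mod_cast hTpos.ne'
    have hcancel := mul_left_cancel₀ hTz main
    linarith
  -- conclude
  obtain ⟨a, b, hab, hnadj⟩ := hpair
  refine ⟨v, k, l, (G.neighborFinset a ∩ G.neighborFinset b).card, ?_⟩
  refine ⟨hER.1, hER.2.1, fun p q hpq => hER.2.2 p q hpq, ?_⟩
  intro p q hpq hnadj2
  rw [common_card_aux]
  have h1 := key p q hpq hnadj2
  have h2 := key a b hab hnadj
  have hwpos : (0 : ℤ) < (s : ℤ) + 1 - e := by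
    have : (e : ℤ) ≤ s := by exact_mod_cast hes
    linarith
  have := mul_right_cancel₀ hwpos.ne' (h1.trans h2.symm)
  exact_mod_cast this
end

section
/- Let Γ be a finite simple graph on v ≥ 3 vertices that is not a complete multipartite graph. Let k̄ := 2|E(Γ)|/v be its average degree and let λ̄ := (Σ_{{x,y}∈E(Γ)} |N(x)∩N(y)|)/|E(Γ)| be the average, over all edges, of the number of common neighbours of the two endpoints. Then v + λ̄ − 2k̄ > 0. -/
open scoped Classical
open Matrix

variable {V : Type*}

/-!
For an edge `xy`, `|N(x) ∩ N(y)| = d(x) + d(y) - |N(x) ∪ N(y)| ≥ d(x) + d(y) - v`, with strict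
inequality when `x` and `y` have a common non-neighbour; such an edge exists precisely when the
graph is not complete multipartite. Summing over the edges and using Cauchy–Schwarz,
`|E| λ̄ > ∑ d(v)² - v |E| ≥ (2|E|)² / v - v |E|`, which is the claim after dividing by `|E|`.
-/

open Finset

namespace SimpleGraph

variable [Fintype V] (G : SimpleGraph V) [DecidableRel G.Adj]

theorem sum_darts_edge {M : Type*} [AddCommMonoid M] (f : Sym2 V → M) :
    ∑ d : G.Dart, f d.edge = 2 • ∑ e ∈ G.edgeFinset, f e := by
  rw [← sum_fiberwise_of_maps_to (g := Dart.edge) fun d _ => mem_edgeFinset.mpr d.edge_mem,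
    smul_sum]
  refine sum_congr rfl fun e he => ?_
  rw [sum_congr rfl fun d hd => congrArg f (mem_filter.mp hd).2, sum_const,
    G.dart_edge_fiber_card e (mem_edgeFinset.mp he)]

theorem sum_darts_fst {M : Type*} [AddCommMonoid M] (f : V → M) :
    ∑ d : G.Dart, f d.fst = ∑ v, G.degree v • f v := by
  rw [← sum_fiberwise_of_maps_to (g := fun d : G.Dart => d.fst) fun d _ => mem_univ _]
  refine sum_congr rfl fun v _ => ?_
  rw [sum_congr rfl fun d hd => congrArg f (mem_filter.mp hd).2, sum_const,
    G.dart_fst_fiber_card_eq_degree v]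

theorem sum_darts_snd {M : Type*} [AddCommMonoid M] (f : V → M) :
    ∑ d : G.Dart, f d.snd = ∑ v, G.degree v • f v :=
  (Dart.symm_involutive.bijective.sum_comp fun d : G.Dart => f d.fst).trans (G.sum_darts_fst f)

theorem card_neighborFinset_union_add_ncard_commonNeighbors [DecidableEq V] (x y : V) :
    #(G.neighborFinset x ∪ G.neighborFinset y) + (G.commonNeighbors x y).ncard =
      G.degree x + G.degree y := by
  have : (G.commonNeighbors x y).ncard = #(G.neighborFinset x ∩ G.neighborFinset y) := by
    rw [commonNeighbors_eq, ← Set.ncard_coe_finset]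
    simp
  rw [this, card_union_add_card_inter, card_neighborFinset_eq_degree,
    card_neighborFinset_eq_degree]

theorem degree_add_degree_le_ncard_commonNeighbors_add_card (x y : V) :
    G.degree x + G.degree y ≤ (G.commonNeighbors x y).ncard + Fintype.card V := by
  classical
  rw [← G.card_neighborFinset_union_add_ncard_commonNeighbors, add_comm]
  grw [card_le_univ]

theorem degree_add_degree_lt_ncard_commonNeighbors_add_card {x y w : V} (hxw : ¬G.Adj x w)
    (hyw : ¬G.Adj y w) :
    G.degree x + G.degree y < (G.commonNeighbors x y).ncard + Fintype.card V := by
  classical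
  have hw : w ∉ G.neighborFinset x ∪ G.neighborFinset y := by simp [hxw, hyw]
  rw [← G.card_neighborFinset_union_add_ncard_commonNeighbors, add_comm]
  grw [card_lt_univ_of_notMem hw]

theorem sq_two_mul_card_edgeFinset_le :
    (2 * #G.edgeFinset) ^ 2 ≤ Fintype.card V * ∑ v, G.degree v ^ 2 := by
  rw [← sum_degrees_eq_twice_card_edges]
  exact sq_sum_le_card_mul_sum_sq

noncomputable def commonNeighborsCard : Sym2 V → ℕ :=
  Sym2.lift ⟨fun x y => (G.commonNeighbors x y).ncard,
    fun x y => by simp only [commonNeighbors_symm]⟩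

theorem sum_degree_sq_lt_sum_commonNeighborsCard_add {x y z : V} (hxz : G.Adj x z)
    (hxy : ¬G.Adj x y) (hzy : ¬G.Adj z y) :
    ∑ v, G.degree v ^ 2 <
      ∑ e ∈ G.edgeFinset, G.commonNeighborsCard e + #G.edgeFinset * Fintype.card V := by
  suffices 2 * ∑ v, G.degree v ^ 2 <
      2 * (∑ e ∈ G.edgeFinset, G.commonNeighborsCard e + #G.edgeFinset * Fintype.card V) by
    omega
  calc 2 * ∑ v, G.degree v ^ 2 = ∑ d : G.Dart, (G.degree d.fst + G.degree d.snd) := by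
        rw [sum_add_distrib, G.sum_darts_fst (G.degree ·), G.sum_darts_snd (G.degree ·), two_mul]
        simp only [smul_eq_mul, sq]
    _ < ∑ d : G.Dart, (G.commonNeighborsCard d.edge + Fintype.card V) :=
        sum_lt_sum (fun d _ => G.degree_add_degree_le_ncard_commonNeighbors_add_card _ _)
          ⟨⟨(x, z), hxz⟩, mem_univ _,
          G.degree_add_degree_lt_ncard_commonNeighbors_add_card hxy hzy⟩
    _ = _ := by
        rw [sum_add_distrib, sum_darts_edge, sum_const, card_univ, dart_card_eq_twice_card_edges]
        simp only [smul_eq_mul]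
        ring

end SimpleGraph

theorem avgLambda_eq_sum_commonNeighborsCard_div [Fintype V] (G : SimpleGraph V) :
    avgLambda G = (∑ e ∈ G.edgeFinset, G.commonNeighborsCard e : ℕ) / #G.edgeFinset := by
  rw [avgLambda, Nat.cast_sum]
  congr 1
  refine sum_congr rfl fun e _ => ?_
  induction e using Sym2.ind
  rfl

theorem stmt10_general [Fintype V] (G : SimpleGraph V)
    (hncm : ¬ IsCompleteMultipartite G) :
    (Fintype.card V : ℝ) + avgLambda G
      - 2 * (2 * (G.edgeFinset.card : ℝ) / (Fintype.card V : ℝ)) > 0 := by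
  obtain ⟨x, y, z, hxy, hyz, hxz⟩ : ∃ x y z, ¬G.Adj x y ∧ ¬G.Adj y z ∧ G.Adj x z := by
    simpa [IsCompleteMultipartite] using hncm
  have hQ := G.sum_degree_sq_lt_sum_commonNeighborsCard_add hxz hxy fun h => hyz h.symm
  have hCS := G.sq_two_mul_card_edgeFinset_le
  have hm : 0 < #G.edgeFinset := card_pos.mpr ⟨s(x, z), G.mem_edgeFinset.mpr hxz⟩
  have hn : 0 < Fintype.card V := Fintype.card_pos_iff.mpr ⟨x⟩
  rw [avgLambda_eq_sum_commonNeighborsCard_div]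
  generalize ∑ v, G.degree v ^ 2 = Q at *
  generalize ∑ e ∈ G.edgeFinset, G.commonNeighborsCard e = S at *
  generalize #G.edgeFinset = m at *
  generalize Fintype.card V = n at *
  have hQ' : (Q : ℝ) < S + m * n := by exact_mod_cast hQ
  have hCS' : (2 * m : ℝ) ^ 2 ≤ n * Q := by exact_mod_cast hCS
  have hm' : (0 : ℝ) < m := by exact_mod_cast hm
  have hn' : (0 : ℝ) < n := by exact_mod_cast hn
  have : (n : ℝ) + S / m - 2 * (2 * m / n) = (n * (S + m * n) - (2 * m) ^ 2) / (m * n) := by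
    field_simp
    ring
  rw [this]
  refine div_pos ?_ (by positivity)
  linarith [mul_lt_mul_of_pos_left hQ' hn']

/-- For a graph on `v ≥ 3` vertices that is not complete multipartite, with
average degree `k̄ = 2|E|/v` and average number `λ̄` of common neighbours of the endpoints of
an edge, we have `v + λ̄ - 2k̄ > 0`. -/
theorem stmt10 [Fintype V] (G : SimpleGraph V)
    (hv : 3 ≤ Fintype.card V) (hncm : ¬ IsCompleteMultipartite G) :
    (Fintype.card V : ℝ) + avgLambda G
      - 2 * (2 * (G.edgeFinset.card : ℝ) / (Fintype.card V : ℝ)) > 0 :=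
  stmt10_general G hncm
end

section
/- Let Γ be a finite simple graph with adjacency matrix A that is 1-walk-regular, i.e. for every natural number ℓ there exist constants a_ℓ and b_ℓ such that (A^ℓ)_{xx} = a_ℓ for every vertex x and (A^ℓ)_{xy} = b_ℓ for every pair of adjacent vertices x, y. If Γ contains a regular clique, then Γ is a strongly regular graph. -/
open scoped Classical
open Matrix

variable {V : Type*}

/-!
Let `A` be the adjacency matrix, `k` the degree, `K` a regular clique with `c = |K|` and `χ` its
indicator vector. By 1-walk-regularity every `p(A)` is constant on the diagonal and on edges, so
`tr (p(A) (k + (c - 1) A))` and `χᵀ p(A) χ` are both determined by these two constants, and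
`c · tr (p(A) (k + (c - 1) A)) = n k · χᵀ p(A) χ`. As `A χ = s χ + e 𝟙` with `s = c - 1 - e`, we
have `(A - k)(A - s) χ = 0`. If `c ≥ 2` (`c = 1` forces `G = ⊤`), then
`k + (c - 1) A = (c - 1)(A - t)` with `t = -k / (c - 1)`, and `p = m (X - k)(X - s)` for
`m = (X - k)(X - s)(X - t)` gives `tr (m(A)²) = 0`, so `m(A) = 0`. The columns of `(A - s)(A - t)`
are then `k`-eigenvectors of a connected regular graph, hence constant; since this matrix agrees
with `A²` at distinct non-adjacent pairs, `μ` is constant.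
-/

open Polynomial

theorem Polynomial.aeval_X_sub_C {R S : Type*} [CommRing R] [Ring S] [Algebra R S] (x : S)
    (r : R) : aeval x (X - C r) = x - r • 1 := by
  rw [map_sub, aeval_X, aeval_C, Algebra.algebraMap_eq_smul_one]

theorem Matrix.IsSymm.aeval {n R : Type*} [Fintype n] [DecidableEq n] [CommSemiring R]
    {A : Matrix n n R} (hA : A.IsSymm) (p : R[X]) : (aeval A p).IsSymm := by
  induction p using Polynomial.induction_on' with
  | add p q hp hq => simpa using hp.add hq
  | monomial n r => simpa [aeval_monomial, Algebra.algebraMap_eq_smul_one] using (hA.pow n).smul r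

theorem Matrix.IsSymm.eq_zero_of_trace_mul_self_eq_zero {n : Type*} [Fintype n] {M : Matrix n n ℝ}
    (hM : M.IsSymm) (h : (M * M).trace = 0) : M = 0 := by
  refine trace_conjTranspose_mul_self_eq_zero_iff.1 ?_
  rwa [conjTranspose_eq_transpose_of_trivial, hM.eq]

namespace SimpleGraph

-- `G` is 1-walk-regular exactly when every power of its adjacency matrix lies in `G.diagAdjConst`.
variable (G : SimpleGraph V) in
def diagAdjConst (R : Type*) [Semiring R] : Submodule R (Matrix V V R) where
  carrier := {M | (∃ a, ∀ x, M x x = a) ∧ ∃ b, ∀ x y, G.Adj x y → M x y = b}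
  add_mem' := by
    rintro M N ⟨⟨a, ha⟩, b, hb⟩ ⟨⟨a', ha'⟩, b', hb'⟩
    exact ⟨⟨a + a', fun x => by simp [ha, ha']⟩, b + b', fun x y h => by simp [hb x y h, hb' x y h]⟩
  zero_mem' := ⟨⟨0, fun _ => rfl⟩, 0, fun _ _ _ => rfl⟩
  smul_mem' := by
    rintro r M ⟨⟨a, ha⟩, b, hb⟩
    exact ⟨⟨r • a, fun x => by simp [ha]⟩, r • b, fun x y h => by simp [hb x y h]⟩

variable [Fintype V] {G : SimpleGraph V}

theorem adjMatrix_pow_mem_diagAdjConst {R : Type*} [Semiring R] {n : ℕ}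
    (h : G.adjMatrix ℕ ^ n ∈ G.diagAdjConst ℕ) : G.adjMatrix R ^ n ∈ G.diagAdjConst R := by
  obtain ⟨⟨a, ha⟩, b, hb⟩ := h
  refine ⟨⟨a, fun x => ?_⟩, b, fun x y hxy => ?_⟩
  · rw [adjMatrix_pow_apply_eq_card_walk, ← ha x, adjMatrix_pow_apply_eq_card_walk, Nat.cast_id]
  · rw [adjMatrix_pow_apply_eq_card_walk, ← hb x y hxy, adjMatrix_pow_apply_eq_card_walk,
      Nat.cast_id]

theorem adjMatrix_sq_apply {R : Type*} [Semiring R] (x y : V) :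
    (G.adjMatrix R ^ 2) x y = Fintype.card (G.commonNeighbors x y) := by
  rw [adjMatrix_pow_apply_eq_card_walk,
    @Fintype.card_congr _ _ (G.fintypeSetWalkLength x y 2) _ (G.walkLengthTwoEquivCommonNeighbors x y)]

theorem aeval_adjMatrix_mem_diagAdjConst {R : Type*} [CommSemiring R]
    (h : ∀ n, G.adjMatrix R ^ n ∈ G.diagAdjConst R) (p : R[X]) :
    aeval (G.adjMatrix R) p ∈ G.diagAdjConst R := by
  rw [aeval_eq_sum_range]
  exact Submodule.sum_mem _ fun n _ => Submodule.smul_mem _ _ (h n)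

theorem _root_.IsRegularCliqueWith.exists_adj_of_notMem {K : Finset V} {e : ℕ}
    (hK : IsRegularCliqueWith G K e) {x : V} (hx : x ∉ K) : ∃ y ∈ K, G.Adj x y := by
  obtain ⟨y, hy⟩ := Finset.card_pos.1 (hK.2.2 x hx ▸ hK.2.1)
  exact ⟨y, (Finset.mem_filter.1 hy).1, (Finset.mem_filter.1 hy).2⟩

theorem _root_.IsRegularCliqueWith.connected [Nonempty V] {K : Finset V} {e : ℕ}
    (hK : IsRegularCliqueWith G K e) : G.Connected := by
  have reach_clique : ∀ x, ∃ y ∈ K, G.Reachable x y := by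
    intro x
    by_cases hx : x ∈ K
    · exact ⟨x, hx, .refl x⟩
    · obtain ⟨y, hy, hxy⟩ := hK.exists_adj_of_notMem hx
      exact ⟨y, hy, hxy.reachable⟩
  have reach_in_clique : ∀ y ∈ K, ∀ y' ∈ K, G.Reachable y y' := by
    intro y hy y' hy'
    obtain rfl | hne := eq_or_ne y y'
    · rfl
    · exact (hK.1 hy hy' hne).reachable
  refine ⟨fun x x' => ?_⟩
  obtain ⟨y, hy, hxy⟩ := reach_clique x
  obtain ⟨y', hy', hxy'⟩ := reach_clique x'
  exact hxy.trans ((reach_in_clique y hy y' hy').trans hxy'.symm)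

theorem IsRegularOfDegree.apply_eq_of_adjMatrix_mulVec_eq {k : ℕ} (hG : G.IsRegularOfDegree k)
    (hconn : G.Connected) {f : V → ℝ} (hf : G.adjMatrix ℝ *ᵥ f = (k : ℝ) • f) (x y : V) :
    f x = f y := by
  have hlap : G.lapMatrix ℝ *ᵥ f = 0 := by
    ext v
    simp [lapMatrix, Matrix.sub_mulVec, degMatrix_mulVec_apply, hf, hG v]
  exact (lapMatrix_mulVec_eq_zero_iff_forall_reachable G).1 hlap x y (hconn.preconnected x y)

theorem _root_.IsRegularCliqueWith.two_le_card {K : Finset V} {e k : ℕ}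
    (hK : IsRegularCliqueWith G K e) (hG : G.IsRegularOfDegree k) (htop : G ≠ ⊤) :
    2 ≤ K.card := by
  obtain ⟨x, y, hxy, hadj⟩ : ∃ x y, x ≠ y ∧ ¬G.Adj x y := by
    by_contra! h
    exact htop (by ext x y; exact ⟨Adj.ne, h x y⟩)
  have hne : K.Nonempty := by
    by_cases hx : x ∈ K
    · exact ⟨x, hx⟩
    · obtain ⟨u, hu, -⟩ := hK.exists_adj_of_notMem hx
      exact ⟨u, hu⟩
  by_contra! hlt
  obtain ⟨v, rfl⟩ := Finset.card_eq_one.1 (show K.card = 1 by have := hne.card_pos; omega)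
  have hv : G.IsUniversal v := fun w hvw => by
    obtain ⟨u, hu, hwu⟩ := hK.exists_adj_of_notMem (by simpa using hvw.symm)
    rw [Finset.mem_singleton.1 hu] at hwu
    exact hwu.symm
  have hk : k = Fintype.card V - 1 := by rwa [← hG v, degree_eq_card_sub_one]
  have hx : G.IsUniversal x := by rw [← degree_eq_card_sub_one, hG x, hk]
  exact hadj (hx hxy)

variable {R : Type*} [CommRing R] {K : Finset V}

theorem IsRegularOfDegree.trace_mul_adjMatrix {k : ℕ} (hG : G.IsRegularOfDegree k)
    {M : Matrix V V R} {b : R} (hb : ∀ x y, G.Adj x y → M x y = b) :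
    (M * G.adjMatrix R).trace = Fintype.card V * k * b := by
  calc (M * G.adjMatrix R).trace = ∑ x, ∑ u ∈ G.neighborFinset x, M x u := by
        simp [Matrix.trace, mul_adjMatrix_apply]
    _ = ∑ _x : V, (k * b : R) := Finset.sum_congr rfl fun x _ => by
        rw [Finset.sum_congr rfl fun u hu => hb x u ((mem_neighborFinset _ _ _).1 hu),
          Finset.sum_const, card_neighborFinset_eq_degree, hG x, nsmul_eq_mul]
    _ = Fintype.card V * k * b := by simp [mul_assoc]

theorem IsClique.indicator_dotProduct_mulVec_indicator (hK : G.IsClique (K : Set V))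
    {M : Matrix V V R} {a b : R} (ha : ∀ x, M x x = a) (hb : ∀ x y, G.Adj x y → M x y = b) :
    (K : Set V).indicator 1 ⬝ᵥ M *ᵥ (K : Set V).indicator 1 = K.card * (a + (K.card - 1) * b) := by
  calc (K : Set V).indicator 1 ⬝ᵥ M *ᵥ (K : Set V).indicator 1 = ∑ x ∈ K, ∑ y ∈ K, M x y := by
        simp [dotProduct, mulVec, Set.indicator_apply, Finset.sum_ite_mem]
    _ = ∑ _x ∈ K, (a + (K.card - 1) * b) := Finset.sum_congr rfl fun x hx => by
        rw [← Finset.add_sum_erase K _ hx, ha, Finset.sum_congr rfl fun y hy =>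
          hb x y (hK hx (Finset.mem_of_mem_erase hy) (Finset.ne_of_mem_erase hy).symm),
          Finset.sum_const, Finset.card_erase_of_mem hx, nsmul_eq_mul,
          Nat.cast_sub (Finset.card_pos.2 ⟨x, hx⟩), Nat.cast_one]
    _ = K.card * (a + (K.card - 1) * b) := by rw [Finset.sum_const, nsmul_eq_mul]

theorem IsRegularOfDegree.card_mul_trace_eq_dotProduct {k : ℕ} (hG : G.IsRegularOfDegree k)
    (hK : G.IsClique (K : Set V)) {M : Matrix V V R} (hM : M ∈ G.diagAdjConst R) :
    K.card * (M * ((k : R) • 1 + ((K.card : R) - 1) • G.adjMatrix R)).trace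
      = Fintype.card V * k * ((K : Set V).indicator 1 ⬝ᵥ M *ᵥ (K : Set V).indicator 1) := by
  obtain ⟨⟨a, ha⟩, b, hb⟩ := hM
  have htrace : M.trace = Fintype.card V * a := by simp [Matrix.trace, ha]
  rw [Matrix.mul_add, Matrix.mul_smul, Matrix.mul_smul, Matrix.mul_one, Matrix.trace_add,
    Matrix.trace_smul, Matrix.trace_smul, htrace, hG.trace_mul_adjMatrix hb,
    hK.indicator_dotProduct_mulVec_indicator ha hb, smul_eq_mul, smul_eq_mul]
  ring

theorem _root_.IsRegularCliqueWith.adjMatrix_mulVec_indicator {e : ℕ}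
    (hK : IsRegularCliqueWith G K e) :
    G.adjMatrix R *ᵥ (K : Set V).indicator 1
      = ((K.card : R) - 1 - e) • (K : Set V).indicator 1 + Function.const V (e : R) := by
  ext x
  have hsum : (G.adjMatrix R *ᵥ (K : Set V).indicator 1) x = (K.filter (G.Adj x)).card := by
    rw [adjMatrix_mulVec_apply]
    simp only [Set.indicator_apply, Finset.mem_coe, Pi.one_apply, Finset.sum_boole]
    congr 2
    ext y
    simp [and_comm]
  rw [hsum]
  by_cases hx : x ∈ K
  · have : K.filter (G.Adj x) = K.erase x := by
      ext y
      simp only [Finset.mem_filter, Finset.mem_erase]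
      exact ⟨fun h => ⟨h.2.ne', h.1⟩, fun h => ⟨h.2, hK.1 hx h.2 h.1.symm⟩⟩
    rw [this, Finset.card_erase_of_mem hx, Nat.cast_sub (Finset.card_pos.2 ⟨x, hx⟩)]
    simp [hx]
  · simp [hK.2.2 x hx, hx]

theorem _root_.IsRegularCliqueWith.aeval_adjMatrix_eq_zero {e k : ℕ}
    (hwalk : ∀ n, G.adjMatrix ℝ ^ n ∈ G.diagAdjConst ℝ) (hG : G.IsRegularOfDegree k)
    (hK : IsRegularCliqueWith G K e) (hc : 2 ≤ K.card) :
    aeval (G.adjMatrix ℝ) ((X - C (k : ℝ)) * (X - C ((K.card : ℝ) - 1 - e))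
      * (X - C (-k / ((K.card : ℝ) - 1)))) = 0 := by
  set A := G.adjMatrix ℝ
  set χ : V → ℝ := (K : Set V).indicator 1
  set c : ℝ := (K.card : ℝ)
  set t : ℝ := -k / (c - 1)
  set q : ℝ[X] := (X - C (k : ℝ)) * (X - C (c - 1 - e))
  set m : ℝ[X] := q * (X - C t)
  have hc2 : (2 : ℝ) ≤ c := by simp only [c]; exact_mod_cast hc
  have hc1 : c - 1 ≠ 0 := by linarith
  have hqχ : aeval A q *ᵥ χ = 0 := by
    have hs : (A - (c - 1 - e) • 1) *ᵥ χ = Function.const V (e : ℝ) := by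
      rw [sub_mulVec, smul_mulVec, one_mulVec, hK.adjMatrix_mulVec_indicator, add_sub_cancel_left]
    have hk : (A - (k : ℝ) • 1) *ᵥ Function.const V (e : ℝ) = 0 := by
      ext x
      simp [A, sub_mulVec, smul_mulVec, hG x]
    rw [map_mul, aeval_X_sub_C, aeval_X_sub_C, ← mulVec_mulVec, hs, hk]
  have hquad : χ ⬝ᵥ aeval A (m * q) *ᵥ χ = 0 := by
    rw [map_mul, ← mulVec_mulVec, hqχ, mulVec_zero, dotProduct_zero]
  have hT : (k : ℝ) • 1 + (c - 1) • A = aeval A (C (c - 1) * (X - C t)) := by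
    rw [map_mul, aeval_C, aeval_X_sub_C, Algebra.algebraMap_eq_smul_one, smul_mul, one_mul,
      smul_sub, smul_smul, mul_div_cancel₀ _ hc1, neg_smul, sub_neg_eq_add, add_comm]
  have hsq : aeval A (m * q) * ((k : ℝ) • 1 + (c - 1) • A) = (c - 1) • (aeval A m * aeval A m) := by
    rw [hT, ← map_mul, ← map_mul, show m * q * (C (c - 1) * (X - C t)) = C (c - 1) * (m * m) by ring,
      map_mul, aeval_C, Algebra.algebraMap_eq_smul_one, smul_mul, one_mul]
  have htrace := hG.card_mul_trace_eq_dotProduct hK.1 (aeval_adjMatrix_mem_diagAdjConst hwalk (m * q))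
  rw [hquad, mul_zero, hsq, trace_smul, smul_eq_mul] at htrace
  refine ((isSymm_adjMatrix G).aeval m).eq_zero_of_trace_mul_self_eq_zero ?_
  exact (mul_eq_zero.1 ((mul_eq_zero.1 htrace).resolve_left (by linarith))).resolve_left hc1

theorem IsRegularOfDegree.exists_card_commonNeighbors_eq {k : ℕ} (hG : G.IsRegularOfDegree k)
    (hconn : G.Connected) {s t : ℝ}
    (h : aeval (G.adjMatrix ℝ) ((X - C (k : ℝ)) * (X - C s) * (X - C t)) = 0) :
    ∃ μ : ℕ, Pairwise fun v w => ¬G.Adj v w → Fintype.card (G.commonNeighbors v w) = μ := by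
  set A := G.adjMatrix ℝ
  set N := aeval A ((X - C s) * (X - C t))
  have hAN : A * N = (k : ℝ) • N := by
    rwa [mul_assoc, map_mul, aeval_X_sub_C, sub_mul, smul_mul, one_mul, sub_eq_zero] at h
  have hcol : ∀ x x' y, N x y = N x' y := fun x x' y =>
    hG.apply_eq_of_adjMatrix_mulVec_eq hconn (f := fun z => N z y)
      (funext fun z => congrFun (congrFun hAN z) y) x x'
  have hsymm : N.IsSymm := (isSymm_adjMatrix G).aeval _
  have hconst : ∀ x y x' y', N x y = N x' y' := fun x y x' y' => by
    rw [hcol x x' y, hsymm.apply y x', hcol y y' x', hsymm.apply y' x']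
  have hentry : ∀ x y, x ≠ y → ¬G.Adj x y → N x y = Fintype.card (G.commonNeighbors x y) := by
    intro x y hxy hadj
    rw [← adjMatrix_sq_apply]
    simp only [N, map_mul, aeval_X_sub_C, sub_mul, mul_sub, Matrix.smul_mul, Matrix.mul_smul,
      Matrix.one_mul, Matrix.mul_one, Matrix.sub_apply, Matrix.smul_apply, one_apply_ne hxy, A,
      adjMatrix_apply, hadj, if_false, sq, smul_zero, sub_zero]
  by_cases hex : ∃ x y, x ≠ y ∧ ¬G.Adj x y
  · obtain ⟨x₀, y₀, hxy₀, hadj₀⟩ := hex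
    refine ⟨Fintype.card (G.commonNeighbors x₀ y₀), fun x y hxy hadj => ?_⟩
    exact_mod_cast (hentry x y hxy hadj).symm.trans
      ((hconst x y x₀ y₀).trans (hentry x₀ y₀ hxy₀ hadj₀))
  · push Not at hex
    exact ⟨0, fun x y hxy hadj => absurd (hex x y hxy) hadj⟩

end SimpleGraph

/-- A 1-walk-regular graph (the number of walks of any fixed length `n`
between two vertices only depends on whether they are equal or adjacent) containing a regular
clique is strongly regular. -/
theorem stmt16 [Fintype V] (G : SimpleGraph V)
    (hwalk : ∀ n : ℕ,
      (∃ a : ℕ, ∀ x : V, (G.adjMatrix ℕ ^ n) x x = a) ∧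
      (∃ b : ℕ, ∀ x y : V, G.Adj x y → (G.adjMatrix ℕ ^ n) x y = b))
    (hclq : ∃ (C : Finset V) (e : ℕ), IsRegularCliqueWith G C e) :
    ∃ n k l m : ℕ, G.IsSRGWith n k l m := by
  obtain ⟨C, e, hC⟩ := hclq
  obtain ⟨k, hk⟩ : ∃ k, G.IsRegularOfDegree k := by
    obtain ⟨k, hk⟩ := (hwalk 2).1
    exact ⟨k, fun x => by rw [← hk x, sq, SimpleGraph.adjMatrix_mul_self_apply_self, Nat.cast_id]⟩
  obtain ⟨l, hl⟩ : ∃ l, ∀ x y, G.Adj x y → Fintype.card (G.commonNeighbors x y) = l := by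
    obtain ⟨l, hl⟩ := (hwalk 2).2
    exact ⟨l, fun x y hxy => by rw [← hl x y hxy, SimpleGraph.adjMatrix_sq_apply, Nat.cast_id]⟩
  by_cases htop : G = ⊤
  · subst htop
    exact ⟨_, _, _, 0, by convert SimpleGraph.IsSRGWith.top (V := V)⟩
  have : Nonempty V := by
    by_contra hV
    exact htop (by ext x; exact (not_nonempty_iff.1 hV).elim x)
  have hpow (n : ℕ) : G.adjMatrix ℝ ^ n ∈ G.diagAdjConst ℝ :=
    SimpleGraph.adjMatrix_pow_mem_diagAdjConst (hwalk n)
  obtain ⟨μ, hμ⟩ := hk.exists_card_commonNeighbors_eq hC.connected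
    (hC.aeval_adjMatrix_eq_zero hpow hk (hC.two_le_card hk htop))
  exact ⟨_, k, l, μ, ⟨rfl, hk, hl, hμ⟩⟩
end
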